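/- arXiv:1605.04762 — 8 statements merged into one kernel-verified Lean document; each statement's English description precedes it below -/
import Mathlib

section
/- Let R be a commutative ring and d : R → R a derivation. For a finitely supported family a : ℕ → R and k ≥ 0, define the k-th higher Euler expression E_k(a) := ∑_{j ≥ 0} (−1)^j · binom(k+j, k) · d^j(a(k+j)) (a finite sum). Then for every b ∈ R: ∑_{m ≥ 0} a(m) · d^m(b) = ∑_{k ≥ 0} d^k( E_k(a) · b ). -/
section Aux
variable {R : Type*} [CommRing R] (d : Derivation ℤ R R)

lemma it_add (n : ℕ) (x y : R) : (⇑d)^[n] (x + y) = (⇑d)^[n] x + (⇑d)^[n] y := by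
  induction n generalizing x y with
  | zero => rfl
  | succ n ih => simp [Function.iterate_succ_apply, ih]

lemma it_zero (n : ℕ) : (⇑d)^[n] (0 : R) = 0 := by
  induction n with
  | zero => rfl
  | succ n ih => simp [Function.iterate_succ_apply', ih]

lemma it_smul (n : ℕ) (z : ℤ) (x : R) : (⇑d)^[n] (z • x) = z • (⇑d)^[n] x := by
  induction n generalizing x with
  | zero => rfl
  | succ n ih => rw [Function.iterate_succ_apply, Function.iterate_succ_apply, d.map_smul, ih]

lemma it_neg (n : ℕ) (x : R) : (⇑d)^[n] (-x) = -(⇑d)^[n] x := by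
  simpa using it_smul d n (-1) x

lemma it_sub (n : ℕ) (x y : R) : (⇑d)^[n] (x - y) = (⇑d)^[n] x - (⇑d)^[n] y := by
  rw [sub_eq_add_neg, it_add, it_neg, sub_eq_add_neg]

lemma it_sum {ι : Type*} (n : ℕ) (s : Finset ι) (f : ι → R) :
    (⇑d)^[n] (∑ i ∈ s, f i) = ∑ i ∈ s, (⇑d)^[n] (f i) := by
  classical
  induction s using Finset.induction_on with
  | empty => simp [it_zero]
  | insert _ _ h ih => simp [Finset.sum_insert h, it_add, ih]

lemma key (m : ℕ) (c b : R) :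
    c * (⇑d)^[m] b = ∑ k ∈ Finset.range (m+1),
      (⇑d)^[k] (((-1 : ℤ) ^ (m-k) * (m.choose k : ℤ)) • ((⇑d)^[m-k] c * b)) := by
  induction m generalizing b with
  | zero => simp
  | succ m ih =>
    have hstep : ∀ k ∈ Finset.range (m+1),
        (⇑d)^[k] (((-1:ℤ)^(m-k) * (m.choose k : ℤ)) • ((⇑d)^[m-k] c * d b))
        = (⇑d)^[k+1] (((-1:ℤ)^(m-k) * (m.choose k : ℤ)) • ((⇑d)^[m-k] c * b))
          - (⇑d)^[k] (((-1:ℤ)^(m-k) * (m.choose k : ℤ)) • ((⇑d)^[m+1-k] c * b)) := by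
      intro k hk
      rw [Finset.mem_range] at hk
      have hmk : m + 1 - k = (m - k) + 1 := by omega
      have h1 : (⇑d)^[m-k] c * d b
          = d ((⇑d)^[m-k] c * b) - (⇑d)^[m+1-k] c * b := by
        rw [hmk, Function.iterate_succ_apply', d.leibniz, smul_eq_mul, smul_eq_mul]
        ring
      rw [h1, smul_sub, it_sub, ← d.map_smul, ← Function.iterate_succ_apply]
    calc c * (⇑d)^[m+1] b = c * (⇑d)^[m] (d b) := by rw [Function.iterate_succ_apply]
      _ = ∑ k ∈ Finset.range (m+1),
            (⇑d)^[k] (((-1:ℤ)^(m-k) * (m.choose k : ℤ)) • ((⇑d)^[m-k] c * d b)) := ih (d b)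
      _ = ∑ k ∈ Finset.range (m+1),
            ((⇑d)^[k+1] (((-1:ℤ)^(m-k) * (m.choose k : ℤ)) • ((⇑d)^[m-k] c * b))
             - (⇑d)^[k] (((-1:ℤ)^(m-k) * (m.choose k : ℤ)) • ((⇑d)^[m+1-k] c * b))) :=
        Finset.sum_congr rfl hstep
      _ = (∑ k ∈ Finset.range (m+1),
            (⇑d)^[k+1] (((-1:ℤ)^(m-k) * (m.choose k : ℤ)) • ((⇑d)^[m-k] c * b)))
          - ∑ k ∈ Finset.range (m+1),
            (⇑d)^[k] (((-1:ℤ)^(m-k) * (m.choose k : ℤ)) • ((⇑d)^[m+1-k] c * b)) :=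
        Finset.sum_sub_distrib _ _
      _ = ∑ k ∈ Finset.range (m+1+1),
            (⇑d)^[k] (((-1 : ℤ) ^ (m+1-k) * ((m+1).choose k : ℤ)) • ((⇑d)^[m+1-k] c * b)) := by
        rw [eq_comm, Finset.sum_range_succ' (fun k => (⇑d)^[k]
              (((-1 : ℤ) ^ (m+1-k) * ((m+1).choose k : ℤ)) • ((⇑d)^[m+1-k] c * b))) (m+1)]
        -- abbreviations
        set Z : ℕ → R := fun k => (⇑d)^[k+1]
          (((-1:ℤ)^(m-k) * (m.choose (k+1) : ℤ)) • ((⇑d)^[m-k] c * b)) with hZ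
        have hW : ∀ k, (⇑d)^[k+1] (((-1 : ℤ) ^ (m+1-(k+1)) * ((m+1).choose (k+1) : ℤ)) •
              ((⇑d)^[m+1-(k+1)] c * b))
            = (⇑d)^[k+1] (((-1:ℤ)^(m-k) * (m.choose k : ℤ)) • ((⇑d)^[m-k] c * b)) + Z k := by
          intro k
          have h2 : m + 1 - (k+1) = m - k := by omega
          rw [h2, hZ]
          rw [Nat.choose_succ_succ]
          push_cast
          rw [mul_add, add_smul, it_add]
        have hV : ∀ k ∈ Finset.range m,
            (⇑d)^[k+1] (((-1:ℤ)^(m-(k+1)) * (m.choose (k+1) : ℤ)) • ((⇑d)^[m+1-(k+1)] c * b))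
            = - Z k := by
          intro k hk
          rw [Finset.mem_range] at hk
          have h2 : m + 1 - (k+1) = m - k := by omega
          have hcoef : ((-1:ℤ)^(m-(k+1)) * (m.choose (k+1) : ℤ))
              = -((-1:ℤ)^(m-k) * (m.choose (k+1) : ℤ)) := by
            have h3 : m - k = (m - (k+1)) + 1 := by omega
            rw [h3, pow_succ]; ring
          rw [h2, hcoef, neg_smul, it_neg, hZ]
        have e1 : (∑ k ∈ Finset.range (m+1), (⇑d)^[k+1]
              (((-1 : ℤ) ^ (m+1-(k+1)) * ((m+1).choose (k+1) : ℤ)) • ((⇑d)^[m+1-(k+1)] c * b)))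
            = (∑ k ∈ Finset.range (m+1),
                (⇑d)^[k+1] (((-1:ℤ)^(m-k) * (m.choose k : ℤ)) • ((⇑d)^[m-k] c * b)))
              + ∑ k ∈ Finset.range (m+1), Z k := by
          rw [Finset.sum_congr rfl (fun k _ => hW k), Finset.sum_add_distrib]
        have e2 : ∑ k ∈ Finset.range (m+1), Z k = ∑ k ∈ Finset.range m, Z k := by
          rw [Finset.sum_range_succ, hZ]
          simp [Nat.choose_succ_self, it_zero]
        have e3 : (∑ k ∈ Finset.range (m+1),
              (⇑d)^[k] (((-1:ℤ)^(m-k) * (m.choose k : ℤ)) • ((⇑d)^[m+1-k] c * b)))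
            = (∑ k ∈ Finset.range m, - Z k) + ((-1:ℤ)^m) • ((⇑d)^[m+1] c * b) := by
          rw [Finset.sum_range_succ' (fun k => (⇑d)^[k]
              (((-1:ℤ)^(m-k) * (m.choose k : ℤ)) • ((⇑d)^[m+1-k] c * b))) m]
          congr 1
          · exact Finset.sum_congr rfl hV
          · simp
        rw [e1, e2, e3]
        have e4 : ((-1 : ℤ) ^ (m+1-0) * ((m+1).choose 0 : ℤ)) • ((⇑d)^[m+1-0] c * b)
            = -(((-1:ℤ)^m) • ((⇑d)^[m+1] c * b)) := by
          simp [pow_succ]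
        simp only [Function.iterate_zero, id_eq, Nat.sub_zero] at *
        rw [e4, Finset.sum_neg_distrib]
        abel
  done

end Aux


/-- The `k`-th higher Euler expression of a finitely supported family `a : ℕ → R`
with respect to a derivation `d`:
`E_k(a) = ∑_{j ≥ 0} (−1)^j · binom(k+j,k) · d^j(a(k+j))`. -/
noncomputable def eulerExpr {R : Type*} [CommRing R] (d : Derivation ℤ R R)
    (a : ℕ → R) (k : ℕ) : R :=
  ∑ᶠ j : ℕ, ((-1 : ℤ) ^ j * ((k + j).choose k : ℤ)) • (⇑d)^[j] (a (k + j))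

/-- For a commutative ring `R`, a derivation `d : R → R`, a finitely
supported family `a : ℕ → R`, and any `b ∈ R`:
`∑_{m ≥ 0} a(m) · d^m(b) = ∑_{k ≥ 0} d^k( E_k(a) · b )`. -/
theorem stmt1 {R : Type*} [CommRing R] (d : Derivation ℤ R R)
    (a : ℕ → R) (ha : (Function.support a).Finite) (b : R) :
    (∑ᶠ m : ℕ, a m * (⇑d)^[m] b)
      = ∑ᶠ k : ℕ, (⇑d)^[k] (eulerExpr d a k * b) := by
  classical
  obtain ⟨N₀, hN₀⟩ := ha.bddAbove
  set N := N₀ + 1 with hNdef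
  have hN : ∀ m, N ≤ m → a m = 0 := by
    intro m hm
    by_contra h
    have : m ≤ N₀ := hN₀ h
    omega
  -- zero term lemma
  have hF0 : ∀ k j : ℕ, N ≤ k + j →
      ((-1 : ℤ) ^ j * ((k + j).choose k : ℤ)) • (⇑d)^[j] (a (k + j)) = 0 := by
    intro k j h
    rw [hN _ h, it_zero, smul_zero]
  have haE : ∀ k, eulerExpr d a k = ∑ j ∈ Finset.range N,
      ((-1 : ℤ) ^ j * ((k + j).choose k : ℤ)) • (⇑d)^[j] (a (k + j)) := by
    intro k
    apply finsum_eq_sum_of_support_subset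
    intro j hj
    simp only [Finset.coe_range, Set.mem_Iio]
    by_contra h
    exact hj (hF0 k j (by omega))
  have hL : (∑ᶠ m : ℕ, a m * (⇑d)^[m] b) = ∑ m ∈ Finset.range N, a m * (⇑d)^[m] b := by
    apply finsum_eq_sum_of_support_subset
    intro m hm
    simp only [Finset.coe_range, Set.mem_Iio]
    by_contra h
    exact hm (show a m * (⇑d)^[m] b = 0 by rw [hN m (by omega), zero_mul])
  have hR : (∑ᶠ k : ℕ, (⇑d)^[k] (eulerExpr d a k * b))
      = ∑ k ∈ Finset.range N, (⇑d)^[k] (eulerExpr d a k * b) := by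
    apply finsum_eq_sum_of_support_subset
    intro k hk
    simp only [Finset.coe_range, Set.mem_Iio]
    by_contra h
    apply hk
    have : eulerExpr d a k = 0 := by
      rw [haE k]
      apply Finset.sum_eq_zero
      intro j _
      exact hF0 k j (by omega)
    show (⇑d)^[k] (eulerExpr d a k * b) = 0
    rw [this, zero_mul, it_zero]
  rw [hL, hR]
  -- introduce the common term
  set F : ℕ → ℕ → R := fun k j => (⇑d)^[k]
    (((-1 : ℤ) ^ j * ((k + j).choose k : ℤ)) • ((⇑d)^[j] (a (k + j)) * b)) with hFdef
  have hRHS : (∑ k ∈ Finset.range N, (⇑d)^[k] (eulerExpr d a k * b))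
      = ∑ k ∈ Finset.range N, ∑ j ∈ Finset.range N, F k j := by
    apply Finset.sum_congr rfl
    intro k _
    rw [haE k, Finset.sum_mul, it_sum]
    apply Finset.sum_congr rfl
    intro j _
    rw [hFdef, smul_mul_assoc]
  have hLHS : (∑ m ∈ Finset.range N, a m * (⇑d)^[m] b)
      = ∑ m ∈ Finset.range N, ∑ k ∈ Finset.range (m+1), F k (m - k) := by
    apply Finset.sum_congr rfl
    intro m _
    rw [key d m (a m) b]
    apply Finset.sum_congr rfl
    intro k hk
    rw [Finset.mem_range] at hk
    have h1 : k + (m - k) = m := by omega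
    rw [hFdef]
    simp only [h1]
  rw [hRHS, hLHS]
  -- now reindex
  rw [← Finset.sum_product']
  have hzero : ∀ p : ℕ × ℕ, p ∈ Finset.range N ×ˢ Finset.range N →
      ¬(p.1 + p.2 < N) → F p.1 p.2 = 0 := by
    intro p _ hp2
    have h : N ≤ p.1 + p.2 := by omega
    show (⇑d)^[p.1] (((-1 : ℤ) ^ p.2 * ((p.1 + p.2).choose p.1 : ℤ)) •
      ((⇑d)^[p.2] (a (p.1 + p.2)) * b)) = 0
    rw [hN _ h, it_zero, zero_mul, smul_zero, it_zero]
  have h1 : (∑ p ∈ Finset.range N ×ˢ Finset.range N, F p.1 p.2)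
      = ∑ p ∈ (Finset.range N ×ˢ Finset.range N).filter (fun p => p.1 + p.2 < N),
          F p.1 p.2 := by
    symm
    apply Finset.sum_filter_of_ne
    intro p hp hne
    by_contra hlt
    exact hne (hzero p hp hlt)
  rw [h1, Finset.sum_sigma']
  apply Finset.sum_nbij' (i := fun p : (Σ _ : ℕ, ℕ) => ((p.2, p.1 - p.2) : ℕ × ℕ))
    (j := fun q : ℕ × ℕ => (⟨q.1 + q.2, q.1⟩ : Σ _ : ℕ, ℕ))
  · intro p hp
    simp only [Finset.mem_sigma, Finset.mem_range] at hp
    simp only [Finset.mem_filter, Finset.mem_product, Finset.mem_range]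
    omega
  · intro q hq
    simp only [Finset.mem_filter, Finset.mem_product, Finset.mem_range] at hq
    simp only [Finset.mem_sigma, Finset.mem_range]
    omega
  · intro p hp
    simp only [Finset.mem_sigma, Finset.mem_range] at hp
    have : p.2 + (p.1 - p.2) = p.1 := by omega
    simp [this]
  · intro q hq
    simp
  · intro p hp
    rfl
end

section
/- Let ι be a type and let R := MvPolynomial ((ι ⊕ ι) × ℕ) ℚ, with field variables u_{i,k} := X(inl i, k) and antifield variables v_{i,k} := X(inr i, k). Let d : R → R be the unique derivation with d(X(s,k)) = X(s,k+1). Write ∂^u_{i,k} f := pderiv(inl i, k) f and ∂^v_{i,k} f := pderiv(inr i, k) f, and define the higher Euler operators E^u_{i,k}(f) := ∑_{j≥0} (−1)^j binom(k+j,k) d^j(∂^u_{i,k+j} f), and similarly E^v_{i,k}. Define the (even, ungraded analogue of the) Soloviev bracket [f,g] := ∑_{i,k,ℓ} ( d^ℓ(∂^u_{i,k} f)·d^k(∂^v_{i,ℓ} g) − d^ℓ(∂^v_{i,k} f)·d^k(∂^u_{i,ℓ} g) ) (a finitely supported sum). Then for all f, g ∈ R: [f,g] = ∑_{k ≥ 0}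 d^k( F_k(g) ), where F_k(g) := ∑_{i,ℓ} ( d^ℓ(E^u_{i,k} f)·∂^v_{i,ℓ} g − d^ℓ(E^v_{i,k} f)·∂^u_{i,ℓ} g ). -/
open MvPolynomial

noncomputable section

/-- The algebra of differential polynomials in fields `u_{i,k} = X (inl i, k)` and
antifields `v_{i,k} = X (inr i, k)`. -/
abbrev DiffPoly (ι : Type*) := MvPolynomial ((ι ⊕ ι) × ℕ) ℚ

/-- The higher Euler operator in the field variables:
`E^u_{i,k}(f) = ∑_{j≥0} (−1)^j binom(k+j,k) d^j(∂^u_{i,k+j} f)`. -/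
def eulerU {ι : Type*} (d : Derivation ℚ (DiffPoly ι) (DiffPoly ι)) (i : ι) (k : ℕ)
    (f : DiffPoly ι) : DiffPoly ι :=
  ∑ᶠ j : ℕ, ((-1 : ℚ) ^ j * ((k + j).choose k : ℚ)) •
    (⇑d)^[j] (pderiv (Sum.inl i, k + j) f)

/-- The higher Euler operator in the antifield variables. -/
def eulerV {ι : Type*} (d : Derivation ℚ (DiffPoly ι) (DiffPoly ι)) (i : ι) (k : ℕ)
    (f : DiffPoly ι) : DiffPoly ι :=
  ∑ᶠ j : ℕ, ((-1 : ℚ) ^ j * ((k + j).choose k : ℚ)) •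
    (⇑d)^[j] (pderiv (Sum.inr i, k + j) f)

/-- The even, ungraded analogue of the Soloviev bracket:
`[f,g] = ∑_{i,k,ℓ} ( d^ℓ(∂^u_{i,k} f)·d^k(∂^v_{i,ℓ} g) − d^ℓ(∂^v_{i,k} f)·d^k(∂^u_{i,ℓ} g) )`. -/
def solovievBracket {ι : Type*} (d : Derivation ℚ (DiffPoly ι) (DiffPoly ι))
    (f g : DiffPoly ι) : DiffPoly ι :=
  ∑ᶠ i : ι, ∑ᶠ k : ℕ, ∑ᶠ ℓ : ℕ,
    ((⇑d)^[ℓ] (pderiv (Sum.inl i, k) f) * (⇑d)^[k] (pderiv (Sum.inr i, ℓ) g)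
      - (⇑d)^[ℓ] (pderiv (Sum.inr i, k) f) * (⇑d)^[k] (pderiv (Sum.inl i, ℓ) g))

section Helpers

open Finset

variable {A : Type*} [CommRing A] [Algebra ℚ A] (d : Derivation ℚ A A)

lemma dIter_add (k : ℕ) (x y : A) : (⇑d)^[k] (x + y) = (⇑d)^[k] x + (⇑d)^[k] y := by
  induction k generalizing x y with
  | zero => rfl
  | succ k ih => simp [Function.iterate_succ_apply, ih]

lemma dIter_smul (k : ℕ) (c : ℚ) (x : A) : (⇑d)^[k] (c • x) = c • (⇑d)^[k] x := by
  induction k generalizing x with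
  | zero => rfl
  | succ k ih => simp [Function.iterate_succ_apply, ih]

lemma dIter_zero (k : ℕ) : (⇑d)^[k] (0:A) = 0 := by
  induction k with
  | zero => rfl
  | succ k ih => simp [Function.iterate_succ_apply, ih]

lemma dIter_sub (k : ℕ) (x y : A) : (⇑d)^[k] (x - y) = (⇑d)^[k] x - (⇑d)^[k] y := by
  induction k generalizing x y with
  | zero => rfl
  | succ k ih => simp [Function.iterate_succ_apply, ih]

lemma dIter_sum {α : Type*} (s : Finset α) (F : α → A) (k : ℕ) :
    (⇑d)^[k] (∑ a ∈ s, F a) = ∑ a ∈ s, (⇑d)^[k] (F a) := by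
  classical
  induction s using Finset.induction with
  | empty => simp [dIter_zero]
  | insert _ _ h ih => simp [Finset.sum_insert h, dIter_add, ih]

lemma dIter_comm (a b : ℕ) (x : A) : (⇑d)^[a] ((⇑d)^[b] x) = (⇑d)^[b] ((⇑d)^[a] x) := by
  rw [← Function.iterate_add_apply, ← Function.iterate_add_apply, Nat.add_comm]

lemma coreL (n : ℕ) (p h : A) :
    ∑ k ∈ range (n+1), ((-1:ℚ)^(n-k) * ((n.choose k : ℕ) : ℚ)) •
      (⇑d)^[k] ((⇑d)^[n-k] p * h) = p * (⇑d)^[n] h := by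
  induction n generalizing p with
  | zero => simp
  | succ n ih =>
    rw [Finset.sum_range_succ']
    have hsplit : ∀ k ∈ range (n+1),
        ((-1:ℚ)^(n+1-(k+1)) * (((n+1).choose (k+1) : ℕ) : ℚ)) •
          (⇑d)^[k+1] ((⇑d)^[n+1-(k+1)] p * h)
        = ((-1:ℚ)^(n-k) * ((n.choose k : ℕ) : ℚ)) •
            (⇑d)^[k+1] ((⇑d)^[n-k] p * h)
          + ((-1:ℚ)^(n-k) * ((n.choose (k+1) : ℕ) : ℚ)) •
            (⇑d)^[k+1] ((⇑d)^[n-k] p * h) := by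
      intro k hk
      rw [Nat.choose_succ_succ]
      push_cast
      rw [mul_add, add_smul]
    rw [Finset.sum_congr rfl hsplit, Finset.sum_add_distrib]
    have hA : ∑ k ∈ range (n+1), ((-1:ℚ)^(n-k) * ((n.choose k : ℕ) : ℚ)) •
        (⇑d)^[k+1] ((⇑d)^[n-k] p * h) = d (p * (⇑d)^[n] h) := by
      rw [← ih p, map_sum]
      refine Finset.sum_congr rfl fun k hk => ?_
      rw [Function.iterate_succ_apply', Derivation.map_smul]
    have hIH : ∑ k ∈ range (n+1), ((-1:ℚ)^(n-k) * ((n.choose k : ℕ) : ℚ)) •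
        (⇑d)^[k] ((⇑d)^[n+1-k] p * h) = d p * (⇑d)^[n] h := by
      rw [← ih (d p)]
      refine Finset.sum_congr rfl fun k hk => ?_
      simp only [mem_range] at hk
      rw [show n+1-k = (n-k)+1 by omega, Function.iterate_succ_apply]
    have hneg : -(d p * (⇑d)^[n] h) = ∑ k ∈ range (n+1),
        ((-1:ℚ)^(n+1-k) * ((n.choose k : ℕ) : ℚ)) • (⇑d)^[k] ((⇑d)^[n+1-k] p * h) := by
      rw [← hIH, ← Finset.sum_neg_distrib]
      refine Finset.sum_congr rfl fun k hk => ?_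
      simp only [mem_range] at hk
      rw [← neg_smul]
      congr 1
      rw [show n+1-k = (n-k)+1 by omega, pow_succ]
      ring
    have hB : (∑ k ∈ range (n+1), ((-1:ℚ)^(n-k) * ((n.choose (k+1) : ℕ) : ℚ)) •
        (⇑d)^[k+1] ((⇑d)^[n-k] p * h))
        + ((-1:ℚ)^(n+1-0) * (((n+1).choose 0 : ℕ) : ℚ)) • (⇑d)^[0] ((⇑d)^[n+1-0] p * h)
        = -(d p * (⇑d)^[n] h) := by
      rw [hneg]
      conv_rhs => rw [Finset.sum_range_succ']
      congr 1
      · rw [Finset.sum_range_succ, Nat.choose_succ_self]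
        simp only [Nat.cast_zero, mul_zero, zero_smul, add_zero]
        refine Finset.sum_congr rfl fun k hk => ?_
        rw [Nat.succ_sub_succ]
      · norm_num
    rw [hA, add_assoc, hB, Derivation.leibniz, smul_eq_mul, smul_eq_mul,
      show d ((⇑d)^[n] h) = (⇑d)^[n+1] h from (Function.iterate_succ_apply' (⇑d) n h).symm]
    ring

lemma coreM (N : ℕ) (a : ℕ → A) (ha : ∀ k, N ≤ k → a k = 0) (h : A) :
    ∑ k ∈ range N, (⇑d)^[k]
      ((∑ j ∈ range N, ((-1:ℚ)^j * (((k+j).choose k : ℕ) : ℚ)) • (⇑d)^[j] (a (k+j))) * h)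
    = ∑ n ∈ range N, a n * (⇑d)^[n] h := by
  have step1 : ∀ k, (⇑d)^[k]
      ((∑ j ∈ range N, ((-1:ℚ)^j * (((k+j).choose k : ℕ) : ℚ)) • (⇑d)^[j] (a (k+j))) * h)
      = ∑ j ∈ range N, ((-1:ℚ)^j * (((k+j).choose k : ℕ) : ℚ)) •
          (⇑d)^[k] ((⇑d)^[j] (a (k+j)) * h) := by
    intro k
    rw [Finset.sum_mul, dIter_sum]
    refine Finset.sum_congr rfl fun j hj => ?_
    rw [smul_mul_assoc, dIter_smul]
  simp only [step1]
  have step2 : ∀ k ∈ range N, ∑ j ∈ range N, ((-1:ℚ)^j * (((k+j).choose k : ℕ) : ℚ)) •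
        (⇑d)^[k] ((⇑d)^[j] (a (k+j)) * h)
      = ∑ j ∈ range (N-k), ((-1:ℚ)^j * (((k+j).choose k : ℕ) : ℚ)) •
        (⇑d)^[k] ((⇑d)^[j] (a (k+j)) * h) := by
    intro k hk
    simp only [mem_range] at hk
    refine (Finset.sum_subset (by apply Finset.range_subset_range.2; omega) ?_).symm
    intro j hj hj'
    simp only [mem_range] at hj hj'
    rw [ha (k+j) (by omega), dIter_zero, zero_mul, dIter_zero, smul_zero]
  rw [Finset.sum_congr rfl step2]
  have step3 : ∀ k ∈ range N, ∑ j ∈ range (N-k), ((-1:ℚ)^j * (((k+j).choose k : ℕ) : ℚ)) •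
        (⇑d)^[k] ((⇑d)^[j] (a (k+j)) * h)
      = ∑ n ∈ Finset.Ico k N, ((-1:ℚ)^(n-k) * (((k+(n-k)).choose k : ℕ) : ℚ)) •
        (⇑d)^[k] ((⇑d)^[n-k] (a (k+(n-k))) * h) := by
    intro k hk
    rw [Finset.sum_Ico_eq_sum_range]
    refine Finset.sum_congr rfl fun j hj => ?_
    simp only [mem_range] at hj
    congr 1 <;> [skip; congr 1] <;> rw [show k + j - k = j by omega]
  rw [Finset.sum_congr rfl step3]
  rw [Finset.range_eq_Ico, Finset.sum_Ico_Ico_comm, ← Finset.range_eq_Ico]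
  refine Finset.sum_congr rfl fun n hn => ?_
  simp only [mem_range] at hn
  rw [← coreL d n (a n) h]
  refine Finset.sum_congr (Finset.range_eq_Ico _).symm fun k hk => ?_
  simp only [mem_range] at hk
  rw [show k + (n - k) = n by omega]

end Helpers

/-- `[f,g] = ∑_{k ≥ 0} d^k( F_k(g) )`, where
`F_k(g) = ∑_{i,ℓ} ( d^ℓ(E^u_{i,k} f)·∂^v_{i,ℓ} g − d^ℓ(E^v_{i,k} f)·∂^u_{i,ℓ} g )`. -/
theorem stmt2 {ι : Type*} (d : Derivation ℚ (DiffPoly ι) (DiffPoly ι))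
    (hd : ∀ (s : ι ⊕ ι) (k : ℕ), d (X (s, k)) = X (s, k + 1))
    (f g : DiffPoly ι) :
    solovievBracket d f g
      = ∑ᶠ k : ℕ, (⇑d)^[k]
          (∑ᶠ i : ι, ∑ᶠ ℓ : ℕ,
            ((⇑d)^[ℓ] (eulerU d i k f) * pderiv (Sum.inr i, ℓ) g
              - (⇑d)^[ℓ] (eulerV d i k f) * pderiv (Sum.inl i, ℓ) g)) := by
  classical
  open Finset in
  set V : Finset ((ι ⊕ ι) × ℕ) := f.vars ∪ g.vars with hV
  set N : ℕ := V.sup (fun p => p.2) + 1 with hN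
  set S : Finset ι := V.image (fun p => Sum.elim id id p.1) with hS
  have hvf : ∀ x : (ι ⊕ ι) × ℕ, x ∉ V → pderiv x f = 0 := fun x hx =>
    pderiv_eq_zero_of_notMem_vars (fun h => hx (Finset.mem_union_left _ h))
  have hvg : ∀ x : (ι ⊕ ι) × ℕ, x ∉ V → pderiv x g = 0 := fun x hx =>
    pderiv_eq_zero_of_notMem_vars (fun h => hx (Finset.mem_union_right _ h))
  have hbound : ∀ (s : ι ⊕ ι) (k : ℕ), N ≤ k → (s, k) ∉ V := by
    intro s k hk hmem
    have := Finset.le_sup (f := fun p : (ι ⊕ ι) × ℕ => p.2) hmem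
    simp only at this
    omega
  have hfN : ∀ (s : ι ⊕ ι) (k : ℕ), N ≤ k → pderiv (s, k) f = 0 :=
    fun s k hk => hvf _ (hbound s k hk)
  have hgN : ∀ (s : ι ⊕ ι) (k : ℕ), N ≤ k → pderiv (s, k) g = 0 :=
    fun s k hk => hvg _ (hbound s k hk)
  have hSmem : ∀ (i : ι) (s : ι ⊕ ι) (k : ℕ), Sum.elim id id s = i → i ∉ S → (s, k) ∉ V := by
    intro i s k hsi hi hmem
    exact hi (Finset.mem_image.2 ⟨(s, k), hmem, hsi⟩)
  have hfSl : ∀ (i : ι) (k : ℕ), i ∉ S → pderiv (Sum.inl i, k) f = 0 :=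
    fun i k hi => hvf _ (hSmem i (Sum.inl i) k rfl hi)
  have hfSr : ∀ (i : ι) (k : ℕ), i ∉ S → pderiv (Sum.inr i, k) f = 0 :=
    fun i k hi => hvf _ (hSmem i (Sum.inr i) k rfl hi)
  have hgSl : ∀ (i : ι) (k : ℕ), i ∉ S → pderiv (Sum.inl i, k) g = 0 :=
    fun i k hi => hvg _ (hSmem i (Sum.inl i) k rfl hi)
  have hgSr : ∀ (i : ι) (k : ℕ), i ∉ S → pderiv (Sum.inr i, k) g = 0 :=
    fun i k hi => hvg _ (hSmem i (Sum.inr i) k rfl hi)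
  -- finite forms of the Euler operators
  have hEU : ∀ (i : ι) (k : ℕ), eulerU d i k f
      = ∑ j ∈ Finset.range N, ((-1:ℚ)^j * (((k+j).choose k : ℕ) : ℚ)) •
          (⇑d)^[j] (pderiv (Sum.inl i, k+j) f) := by
    intro i k
    rw [eulerU]
    apply finsum_eq_sum_of_support_subset
    rw [Function.support_subset_iff']
    intro j hj
    have : N ≤ j := by simpa using hj
    rw [hfN _ _ (by omega), dIter_zero, smul_zero]
  have hEV : ∀ (i : ι) (k : ℕ), eulerV d i k f
      = ∑ j ∈ Finset.range N, ((-1:ℚ)^j * (((k+j).choose k : ℕ) : ℚ)) •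
          (⇑d)^[j] (pderiv (Sum.inr i, k+j) f) := by
    intro i k
    rw [eulerV]
    apply finsum_eq_sum_of_support_subset
    rw [Function.support_subset_iff']
    intro j hj
    have : N ≤ j := by simpa using hj
    rw [hfN _ _ (by omega), dIter_zero, smul_zero]
  have hEUz : ∀ (i : ι) (k : ℕ), N ≤ k → eulerU d i k f = 0 := by
    intro i k hk
    rw [hEU]
    refine Finset.sum_eq_zero fun j hj => ?_
    rw [hfN _ _ (by omega), dIter_zero, smul_zero]
  have hEVz : ∀ (i : ι) (k : ℕ), N ≤ k → eulerV d i k f = 0 := by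
    intro i k hk
    rw [hEV]
    refine Finset.sum_eq_zero fun j hj => ?_
    rw [hfN _ _ (by omega), dIter_zero, smul_zero]
  -- reduce the LHS to a finite sum
  have hL : solovievBracket d f g = ∑ i ∈ S, ∑ k ∈ Finset.range N, ∑ ℓ ∈ Finset.range N,
      ((⇑d)^[ℓ] (pderiv (Sum.inl i, k) f) * (⇑d)^[k] (pderiv (Sum.inr i, ℓ) g)
        - (⇑d)^[ℓ] (pderiv (Sum.inr i, k) f) * (⇑d)^[k] (pderiv (Sum.inl i, ℓ) g)) := by
    rw [solovievBracket]
    have h1 : ∀ (i : ι) (k : ℕ), (∑ᶠ ℓ : ℕ,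
        ((⇑d)^[ℓ] (pderiv (Sum.inl i, k) f) * (⇑d)^[k] (pderiv (Sum.inr i, ℓ) g)
          - (⇑d)^[ℓ] (pderiv (Sum.inr i, k) f) * (⇑d)^[k] (pderiv (Sum.inl i, ℓ) g)))
        = ∑ ℓ ∈ Finset.range N,
        ((⇑d)^[ℓ] (pderiv (Sum.inl i, k) f) * (⇑d)^[k] (pderiv (Sum.inr i, ℓ) g)
          - (⇑d)^[ℓ] (pderiv (Sum.inr i, k) f) * (⇑d)^[k] (pderiv (Sum.inl i, ℓ) g)) := by
      intro i k
      apply finsum_eq_sum_of_support_subset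
      rw [Function.support_subset_iff']
      intro ℓ hℓ
      have : N ≤ ℓ := by simpa using hℓ
      rw [hgN _ _ this, hgN _ _ this, dIter_zero, mul_zero, mul_zero, sub_zero]
    have h2 : ∀ i : ι, (∑ᶠ k : ℕ, ∑ ℓ ∈ Finset.range N,
        ((⇑d)^[ℓ] (pderiv (Sum.inl i, k) f) * (⇑d)^[k] (pderiv (Sum.inr i, ℓ) g)
          - (⇑d)^[ℓ] (pderiv (Sum.inr i, k) f) * (⇑d)^[k] (pderiv (Sum.inl i, ℓ) g)))
        = ∑ k ∈ Finset.range N, ∑ ℓ ∈ Finset.range N,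
        ((⇑d)^[ℓ] (pderiv (Sum.inl i, k) f) * (⇑d)^[k] (pderiv (Sum.inr i, ℓ) g)
          - (⇑d)^[ℓ] (pderiv (Sum.inr i, k) f) * (⇑d)^[k] (pderiv (Sum.inl i, ℓ) g)) := by
      intro i
      apply finsum_eq_sum_of_support_subset
      rw [Function.support_subset_iff']
      intro k hk
      have hk' : N ≤ k := by simpa using hk
      refine Finset.sum_eq_zero fun ℓ hℓ => ?_
      rw [hfN _ _ hk', hfN _ _ hk', dIter_zero, zero_mul, zero_mul, sub_zero]
    calc (∑ᶠ i : ι, ∑ᶠ k : ℕ, ∑ᶠ ℓ : ℕ,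
        ((⇑d)^[ℓ] (pderiv (Sum.inl i, k) f) * (⇑d)^[k] (pderiv (Sum.inr i, ℓ) g)
          - (⇑d)^[ℓ] (pderiv (Sum.inr i, k) f) * (⇑d)^[k] (pderiv (Sum.inl i, ℓ) g)))
        = ∑ᶠ i : ι, ∑ k ∈ Finset.range N, ∑ ℓ ∈ Finset.range N,
        ((⇑d)^[ℓ] (pderiv (Sum.inl i, k) f) * (⇑d)^[k] (pderiv (Sum.inr i, ℓ) g)
          - (⇑d)^[ℓ] (pderiv (Sum.inr i, k) f) * (⇑d)^[k] (pderiv (Sum.inl i, ℓ) g)) := by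
          refine finsum_congr fun i => ?_
          rw [← h2 i]
          exact finsum_congr fun k => h1 i k
      _ = _ := by
          apply finsum_eq_sum_of_support_subset
          rw [Function.support_subset_iff']
          intro i hi
          refine Finset.sum_eq_zero fun k hk => Finset.sum_eq_zero fun ℓ hℓ => ?_
          rw [hfSl i k hi, hfSr i k hi, dIter_zero, zero_mul, zero_mul, sub_zero]
  -- reduce the RHS to a finite sum
  have hR : (∑ᶠ k : ℕ, (⇑d)^[k] (∑ᶠ i : ι, ∑ᶠ ℓ : ℕ,
      ((⇑d)^[ℓ] (eulerU d i k f) * pderiv (Sum.inr i, ℓ) g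
        - (⇑d)^[ℓ] (eulerV d i k f) * pderiv (Sum.inl i, ℓ) g)))
      = ∑ k ∈ Finset.range N, (⇑d)^[k] (∑ i ∈ S, ∑ ℓ ∈ Finset.range N,
      ((⇑d)^[ℓ] (eulerU d i k f) * pderiv (Sum.inr i, ℓ) g
        - (⇑d)^[ℓ] (eulerV d i k f) * pderiv (Sum.inl i, ℓ) g)) := by
    have h1 : ∀ (i : ι) (k : ℕ), (∑ᶠ ℓ : ℕ,
        ((⇑d)^[ℓ] (eulerU d i k f) * pderiv (Sum.inr i, ℓ) g
          - (⇑d)^[ℓ] (eulerV d i k f) * pderiv (Sum.inl i, ℓ) g))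
        = ∑ ℓ ∈ Finset.range N,
        ((⇑d)^[ℓ] (eulerU d i k f) * pderiv (Sum.inr i, ℓ) g
          - (⇑d)^[ℓ] (eulerV d i k f) * pderiv (Sum.inl i, ℓ) g) := by
      intro i k
      apply finsum_eq_sum_of_support_subset
      rw [Function.support_subset_iff']
      intro ℓ hℓ
      have : N ≤ ℓ := by simpa using hℓ
      rw [hgN _ _ this, hgN _ _ this, mul_zero, mul_zero, sub_zero]
    have h2 : ∀ k : ℕ, (∑ᶠ i : ι, ∑ ℓ ∈ Finset.range N,
        ((⇑d)^[ℓ] (eulerU d i k f) * pderiv (Sum.inr i, ℓ) g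
          - (⇑d)^[ℓ] (eulerV d i k f) * pderiv (Sum.inl i, ℓ) g))
        = ∑ i ∈ S, ∑ ℓ ∈ Finset.range N,
        ((⇑d)^[ℓ] (eulerU d i k f) * pderiv (Sum.inr i, ℓ) g
          - (⇑d)^[ℓ] (eulerV d i k f) * pderiv (Sum.inl i, ℓ) g) := by
      intro k
      apply finsum_eq_sum_of_support_subset
      rw [Function.support_subset_iff']
      intro i hi
      refine Finset.sum_eq_zero fun ℓ hℓ => ?_
      rw [hgSr i ℓ hi, hgSl i ℓ hi, mul_zero, mul_zero, sub_zero]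
    have h3 : ∀ k : ℕ, (∑ᶠ i : ι, ∑ᶠ ℓ : ℕ,
        ((⇑d)^[ℓ] (eulerU d i k f) * pderiv (Sum.inr i, ℓ) g
          - (⇑d)^[ℓ] (eulerV d i k f) * pderiv (Sum.inl i, ℓ) g))
        = ∑ i ∈ S, ∑ ℓ ∈ Finset.range N,
        ((⇑d)^[ℓ] (eulerU d i k f) * pderiv (Sum.inr i, ℓ) g
          - (⇑d)^[ℓ] (eulerV d i k f) * pderiv (Sum.inl i, ℓ) g) := by
      intro k
      rw [← h2 k]
      exact finsum_congr fun i => h1 i k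
    have h4 : ∀ k : ℕ, N ≤ k → ((⇑d)^[k] (∑ᶠ i : ι, ∑ᶠ ℓ : ℕ,
        ((⇑d)^[ℓ] (eulerU d i k f) * pderiv (Sum.inr i, ℓ) g
          - (⇑d)^[ℓ] (eulerV d i k f) * pderiv (Sum.inl i, ℓ) g))) = 0 := by
      intro k hk
      rw [h3 k]
      have : (∑ i ∈ S, ∑ ℓ ∈ Finset.range N,
          ((⇑d)^[ℓ] (eulerU d i k f) * pderiv (Sum.inr i, ℓ) g
            - (⇑d)^[ℓ] (eulerV d i k f) * pderiv (Sum.inl i, ℓ) g)) = 0 := by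
        refine Finset.sum_eq_zero fun i hi => Finset.sum_eq_zero fun ℓ hℓ => ?_
        rw [hEUz i k hk, hEVz i k hk, dIter_zero, zero_mul, zero_mul, sub_zero]
      rw [this, dIter_zero]
    calc (∑ᶠ k : ℕ, (⇑d)^[k] (∑ᶠ i : ι, ∑ᶠ ℓ : ℕ,
        ((⇑d)^[ℓ] (eulerU d i k f) * pderiv (Sum.inr i, ℓ) g
          - (⇑d)^[ℓ] (eulerV d i k f) * pderiv (Sum.inl i, ℓ) g)))
        = ∑ k ∈ Finset.range N, (⇑d)^[k] (∑ᶠ i : ι, ∑ᶠ ℓ : ℕ,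
        ((⇑d)^[ℓ] (eulerU d i k f) * pderiv (Sum.inr i, ℓ) g
          - (⇑d)^[ℓ] (eulerV d i k f) * pderiv (Sum.inl i, ℓ) g)) := by
          apply finsum_eq_sum_of_support_subset
          rw [Function.support_subset_iff']
          intro k hk
          exact h4 k (by simpa using hk)
      _ = _ := Finset.sum_congr rfl fun k _ => by rw [h3 k]
  rw [hL, hR]
  -- push d^[k] inside and rearrange the sums
  have hpush : ∀ k ∈ Finset.range N, (⇑d)^[k] (∑ i ∈ S, ∑ ℓ ∈ Finset.range N,
      ((⇑d)^[ℓ] (eulerU d i k f) * pderiv (Sum.inr i, ℓ) g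
        - (⇑d)^[ℓ] (eulerV d i k f) * pderiv (Sum.inl i, ℓ) g))
      = ∑ i ∈ S, ∑ ℓ ∈ Finset.range N,
      ((⇑d)^[k] ((⇑d)^[ℓ] (eulerU d i k f) * pderiv (Sum.inr i, ℓ) g)
        - (⇑d)^[k] ((⇑d)^[ℓ] (eulerV d i k f) * pderiv (Sum.inl i, ℓ) g)) := by
    intro k _
    rw [dIter_sum]
    refine Finset.sum_congr rfl fun i _ => ?_
    rw [dIter_sum]
    exact Finset.sum_congr rfl fun ℓ _ => dIter_sub d k _ _
  rw [Finset.sum_congr rfl hpush]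
  conv_rhs => rw [Finset.sum_comm]
  refine Finset.sum_congr rfl fun i hi => ?_
  conv_lhs => rw [Finset.sum_comm]
  conv_rhs => rw [Finset.sum_comm]
  refine Finset.sum_congr rfl fun ℓ hℓ => ?_
  rw [Finset.sum_sub_distrib, Finset.sum_sub_distrib]
  congr 1
  · -- u-part: apply coreM with a k = d^[ℓ](∂u_{i,k} f)
    have := coreM d N (fun k => (⇑d)^[ℓ] (pderiv (Sum.inl i, k) f))
      (fun k hk => by show (⇑d)^[ℓ] (pderiv (Sum.inl i, k) f) = 0; rw [hfN _ _ hk, dIter_zero])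
      (pderiv (Sum.inr i, ℓ) g)
    rw [← this]
    refine Finset.sum_congr rfl fun k hk => ?_
    congr 1
    congr 1
    rw [hEU i k, dIter_sum]
    refine Finset.sum_congr rfl fun j hj => ?_
    rw [dIter_smul, dIter_comm]
  · have := coreM d N (fun k => (⇑d)^[ℓ] (pderiv (Sum.inr i, k) f))
      (fun k hk => by show (⇑d)^[ℓ] (pderiv (Sum.inr i, k) f) = 0; rw [hfN _ _ hk, dIter_zero])
      (pderiv (Sum.inl i, ℓ) g)
    rw [← this]
    refine Finset.sum_congr rfl fun k hk => ?_
    congr 1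
    congr 1
    rw [hEV i k, dIter_sum]
    refine Finset.sum_congr rfl fun j hj => ?_
    rw [dIter_smul, dIter_comm]

end
end

section
/- Let ι be a type and let R := MvPolynomial ((ι ⊕ ι) × ℕ) ℚ, with field variables u_{i,k} := X(inl i, k) and antifield variables v_{i,k} := X(inr i, k). Let d : R → R be the unique derivation with d(X(s,k)) = X(s,k+1). Define the (even, ungraded analogue of the) Soloviev bracket [f,g] := ∑_{i,k,ℓ} ( d^ℓ(pderiv(inl i,k) f)·d^k(pderiv(inr i,ℓ) g) − d^ℓ(pderiv(inr i,k) f)·d^k(pderiv(inl i,ℓ) g) ). Then for all f, g ∈ R: [d f, g] = d[f, g] and [f, d g] = d[f, g]. -/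
open MvPolynomial

noncomputable section

namespace SolAux

variable {ι : Type*} (d : Derivation ℚ (DiffPoly ι) (DiffPoly ι))

lemma it_zero (n : ℕ) : (⇑d)^[n] (0 : DiffPoly ι) = 0 :=
  Function.iterate_fixed (map_zero d) n

lemma it_d (n : ℕ) (x : DiffPoly ι) : (⇑d)^[n] (d x) = d ((⇑d)^[n] x) := by
  rw [← Function.iterate_succ_apply, Function.iterate_succ_apply']

lemma it_add (n : ℕ) (x y : DiffPoly ι) :
    (⇑d)^[n] (x + y) = (⇑d)^[n] x + (⇑d)^[n] y := by
  induction n with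
  | zero => rfl
  | succ n ih =>
      rw [Function.iterate_succ_apply', Function.iterate_succ_apply',
        Function.iterate_succ_apply', ih, map_add]

def shiftVal (a : ℕ → DiffPoly ι) : ℕ → DiffPoly ι
  | 0 => 0
  | (k+1) => a k

lemma pderiv_d_succ (hd : ∀ (s : ι ⊕ ι) (k : ℕ), d (X (s, k)) = X (s, k + 1)) (s : ι ⊕ ι) (k : ℕ) (h : DiffPoly ι) :
    pderiv (s, k+1) (d h) = d (pderiv (s, k+1) h) + pderiv (s, k) h := by
  have key : ⁅(pderiv (s, k+1) : Derivation ℚ (DiffPoly ι) (DiffPoly ι)), d⁆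
      = pderiv (s, k) := by
    apply derivation_ext
    rintro ⟨t, m⟩
    rw [Derivation.commutator_apply, hd]
    have h2 : d (pderiv ((s, k+1)) (X ((t, m)) : DiffPoly ι)) = 0 := by
      by_cases h3 : ((t, m) : (ι ⊕ ι) × ℕ) = (s, k+1)
      · rw [h3, pderiv_X_self]; exact d.map_one_eq_zero
      · rw [pderiv_X_of_ne h3, map_zero]
    rw [h2, sub_zero]
    by_cases h1 : ((t, m) : (ι ⊕ ι) × ℕ) = (s, k)
    · obtain ⟨rfl, rfl⟩ := Prod.mk.injEq .. ▸ h1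
      rw [pderiv_X_self, pderiv_X_self]
    · rw [pderiv_X_of_ne h1, pderiv_X_of_ne]
      intro hc
      apply h1
      rw [Prod.ext_iff] at hc ⊢
      exact ⟨hc.1, Nat.succ_injective hc.2⟩
  have h4 : ⁅(pderiv (s, k+1) : Derivation ℚ (DiffPoly ι) (DiffPoly ι)), d⁆ h
      = pderiv (s, k) h := by rw [key]
  rw [Derivation.commutator_apply] at h4
  exact sub_eq_iff_eq_add'.mp h4

lemma pderiv_d_zero (hd : ∀ (s : ι ⊕ ι) (k : ℕ), d (X (s, k)) = X (s, k + 1)) (s : ι ⊕ ι) (h : DiffPoly ι) :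
    pderiv (s, 0) (d h) = d (pderiv (s, 0) h) := by
  have key : ⁅(pderiv (s, 0) : Derivation ℚ (DiffPoly ι) (DiffPoly ι)), d⁆ = 0 := by
    apply derivation_ext
    rintro ⟨t, m⟩
    rw [Derivation.commutator_apply, hd]
    have h2 : d (pderiv ((s, 0)) (X ((t, m)) : DiffPoly ι)) = 0 := by
      by_cases h3 : ((t, m) : (ι ⊕ ι) × ℕ) = (s, 0)
      · rw [h3, pderiv_X_self]; exact d.map_one_eq_zero
      · rw [pderiv_X_of_ne h3, map_zero]
    rw [h2, sub_zero, pderiv_X_of_ne, Derivation.coe_zero, Pi.zero_apply]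
    intro hc
    rw [Prod.ext_iff] at hc
    exact Nat.succ_ne_zero m hc.2
  have h4 : ⁅(pderiv (s, 0) : Derivation ℚ (DiffPoly ι) (DiffPoly ι)), d⁆ h = 0 := by
    rw [key]; rfl
  rw [Derivation.commutator_apply] at h4
  exact sub_eq_zero.mp h4

lemma pderiv_d (hd : ∀ (s : ι ⊕ ι) (k : ℕ), d (X (s, k)) = X (s, k + 1)) (s : ι ⊕ ι) (k : ℕ) (h : DiffPoly ι) :
    pderiv (s, k) (d h)
      = d (pderiv (s, k) h) + shiftVal (fun m => pderiv (s, m) h) k := by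
  cases k with
  | zero => rw [pderiv_d_zero d hd, shiftVal, add_zero]
  | succ k => exact pderiv_d_succ d hd s k h


lemma core (M : ℕ) (a b : ℕ → DiffPoly ι) (haM : a M = 0) :
    ∑ k ∈ Finset.range (M+1), ∑ ℓ ∈ Finset.range (M+1),
        (⇑d)^[ℓ] (d (a k) + shiftVal a k) * (⇑d)^[k] (b ℓ)
      = d (∑ k ∈ Finset.range (M+1), ∑ ℓ ∈ Finset.range (M+1),
        (⇑d)^[ℓ] (a k) * (⇑d)^[k] (b ℓ)) := by
  have expand : ∀ k ℓ, d ((⇑d)^[ℓ] (a k) * (⇑d)^[k] (b ℓ))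
      = (⇑d)^[ℓ] (d (a k)) * (⇑d)^[k] (b ℓ) + (⇑d)^[ℓ] (a k) * (⇑d)^[k] (d (b ℓ)) := by
    intro k ℓ
    rw [Derivation.leibniz, smul_eq_mul, smul_eq_mul, it_d, it_d]
    ring
  rw [map_sum]
  simp_rw [map_sum, expand, it_add, add_mul, Finset.sum_add_distrib]
  congr 1
  rw [Finset.sum_range_succ'
    (fun k => ∑ ℓ ∈ Finset.range (M+1), (⇑d)^[ℓ] (shiftVal a k) * (⇑d)^[k] (b ℓ)) M]
  rw [Finset.sum_range_succ
    (fun k => ∑ ℓ ∈ Finset.range (M+1), (⇑d)^[ℓ] (a k) * (⇑d)^[k] (d (b ℓ))) M]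
  simp only [shiftVal, haM, it_zero, zero_mul, Finset.sum_const_zero, add_zero,
    Function.iterate_succ_apply]

lemma core_r (M : ℕ) (a b : ℕ → DiffPoly ι) (hbM : b M = 0) :
    ∑ k ∈ Finset.range (M+1), ∑ ℓ ∈ Finset.range (M+1),
        (⇑d)^[ℓ] (a k) * (⇑d)^[k] (d (b ℓ) + shiftVal b ℓ)
      = d (∑ k ∈ Finset.range (M+1), ∑ ℓ ∈ Finset.range (M+1),
        (⇑d)^[ℓ] (a k) * (⇑d)^[k] (b ℓ)) := by
  have expand : ∀ k ℓ, d ((⇑d)^[ℓ] (a k) * (⇑d)^[k] (b ℓ))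
      = (⇑d)^[ℓ] (d (a k)) * (⇑d)^[k] (b ℓ) + (⇑d)^[ℓ] (a k) * (⇑d)^[k] (d (b ℓ)) := by
    intro k ℓ
    rw [Derivation.leibniz, smul_eq_mul, smul_eq_mul, it_d, it_d]
    ring
  rw [map_sum]
  simp_rw [map_sum, expand, it_add, mul_add, Finset.sum_add_distrib]
  rw [add_comm]
  congr 1
  refine Finset.sum_congr rfl fun k _ => ?_
  rw [Finset.sum_range_succ'
    (fun ℓ => (⇑d)^[ℓ] (a k) * (⇑d)^[k] (shiftVal b ℓ)) M]
  rw [Finset.sum_range_succ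
    (fun ℓ => (⇑d)^[ℓ] (d (a k)) * (⇑d)^[k] (b ℓ)) M]
  simp only [shiftVal, hbM, it_zero, mul_zero, add_zero, Function.iterate_succ_apply]

lemma core2 (M : ℕ) (a b c e : ℕ → DiffPoly ι) (haM : a M = 0) (hcM : c M = 0) :
    ∑ k ∈ Finset.range (M+1), ∑ ℓ ∈ Finset.range (M+1),
        ((⇑d)^[ℓ] (d (a k) + shiftVal a k) * (⇑d)^[k] (b ℓ)
          - (⇑d)^[ℓ] (d (c k) + shiftVal c k) * (⇑d)^[k] (e ℓ))
      = d (∑ k ∈ Finset.range (M+1), ∑ ℓ ∈ Finset.range (M+1),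
        ((⇑d)^[ℓ] (a k) * (⇑d)^[k] (b ℓ) - (⇑d)^[ℓ] (c k) * (⇑d)^[k] (e ℓ))) := by
  simp_rw [Finset.sum_sub_distrib, map_sub]
  rw [core d M a b haM, core d M c e hcM]

lemma core2r (M : ℕ) (a b c e : ℕ → DiffPoly ι) (hbM : b M = 0) (heM : e M = 0) :
    ∑ k ∈ Finset.range (M+1), ∑ ℓ ∈ Finset.range (M+1),
        ((⇑d)^[ℓ] (a k) * (⇑d)^[k] (d (b ℓ) + shiftVal b ℓ)
          - (⇑d)^[ℓ] (c k) * (⇑d)^[k] (d (e ℓ) + shiftVal e ℓ))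
      = d (∑ k ∈ Finset.range (M+1), ∑ ℓ ∈ Finset.range (M+1),
        ((⇑d)^[ℓ] (a k) * (⇑d)^[k] (b ℓ) - (⇑d)^[ℓ] (c k) * (⇑d)^[k] (e ℓ))) := by
  simp_rw [Finset.sum_sub_distrib, map_sub]
  rw [core_r d M a b hbM, core_r d M c e heM]

end SolAux

/-- linearity of the Soloviev bracket over the total derivative:
`[d f, g] = d [f, g]` and `[f, d g] = d [f, g]`. -/
theorem stmt4 {ι : Type*} (d : Derivation ℚ (DiffPoly ι) (DiffPoly ι))
    (hd : ∀ (s : ι ⊕ ι) (k : ℕ), d (X (s, k)) = X (s, k + 1))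
    (f g : DiffPoly ι) :
    solovievBracket d (d f) g = d (solovievBracket d f g)
      ∧ solovievBracket d f (d g) = d (solovievBracket d f g) := by
  classical
  open SolAux in
  set M : ℕ := ((f.vars ∪ g.vars).sup fun p => p.2) + 1 with hM
  have hvf : ∀ (s : ι ⊕ ι) (k : ℕ), M ≤ k → pderiv (s, k) f = 0 := by
    intro s k hk
    apply pderiv_eq_zero_of_notMem_vars
    intro hmem
    have : k ≤ (f.vars ∪ g.vars).sup fun p => p.2 :=
      Finset.le_sup (f := fun p : (ι ⊕ ι) × ℕ => p.2) (Finset.mem_union_left _ hmem)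
    omega
  have hvg : ∀ (s : ι ⊕ ι) (k : ℕ), M ≤ k → pderiv (s, k) g = 0 := by
    intro s k hk
    apply pderiv_eq_zero_of_notMem_vars
    intro hmem
    have : k ≤ (f.vars ∪ g.vars).sup fun p => p.2 :=
      Finset.le_sup (f := fun p : (ι ⊕ ι) × ℕ => p.2) (Finset.mem_union_right _ hmem)
    omega
  have hvdf : ∀ (s : ι ⊕ ι) (k : ℕ), M + 1 ≤ k → pderiv (s, k) (d f) = 0 := by
    intro s k hk
    obtain ⟨k, rfl⟩ : ∃ k', k = k' + 1 := ⟨k - 1, by omega⟩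
    rw [pderiv_d_succ d hd, hvf _ _ (by omega), hvf _ _ (by omega), map_zero, add_zero]
  have hvdg : ∀ (s : ι ⊕ ι) (k : ℕ), M + 1 ≤ k → pderiv (s, k) (d g) = 0 := by
    intro s k hk
    obtain ⟨k, rfl⟩ : ∃ k', k = k' + 1 := ⟨k - 1, by omega⟩
    rw [pderiv_d_succ d hd, hvg _ _ (by omega), hvg _ _ (by omega), map_zero, add_zero]
  -- abbreviation for the truncated bracket summand
  set A : DiffPoly ι → DiffPoly ι → ι → DiffPoly ι := fun p q i =>
    ∑ k ∈ Finset.range (M+1), ∑ ℓ ∈ Finset.range (M+1),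
      ((⇑d)^[ℓ] (pderiv (Sum.inl i, k) p) * (⇑d)^[k] (pderiv (Sum.inr i, ℓ) q)
        - (⇑d)^[ℓ] (pderiv (Sum.inr i, k) p) * (⇑d)^[k] (pderiv (Sum.inl i, ℓ) q)) with hA
  -- conversion of the bracket to truncated sums
  have brkt : ∀ (p q : DiffPoly ι),
      (∀ (s : ι ⊕ ι) (k : ℕ), M + 1 ≤ k → pderiv (s, k) p = 0) →
      (∀ (s : ι ⊕ ι) (k : ℕ), M + 1 ≤ k → pderiv (s, k) q = 0) →
      solovievBracket d p q = ∑ᶠ i : ι, A p q i := by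
    intro p q hp hq
    refine finsum_congr fun i => ?_
    have inner : ∀ k : ℕ,
        (∑ᶠ ℓ : ℕ, ((⇑d)^[ℓ] (pderiv (Sum.inl i, k) p) * (⇑d)^[k] (pderiv (Sum.inr i, ℓ) q)
          - (⇑d)^[ℓ] (pderiv (Sum.inr i, k) p) * (⇑d)^[k] (pderiv (Sum.inl i, ℓ) q)))
        = ∑ ℓ ∈ Finset.range (M+1),
            ((⇑d)^[ℓ] (pderiv (Sum.inl i, k) p) * (⇑d)^[k] (pderiv (Sum.inr i, ℓ) q)
          - (⇑d)^[ℓ] (pderiv (Sum.inr i, k) p) * (⇑d)^[k] (pderiv (Sum.inl i, ℓ) q)) := by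
      intro k
      refine finsum_eq_sum_of_support_subset _ ?_
      intro ℓ hℓ
      simp only [Function.mem_support] at hℓ
      simp only [Finset.coe_range, Set.mem_Iio]
      by_contra hc
      push_neg at hc
      exact hℓ (by rw [hq _ _ hc, hq _ _ hc, it_zero, mul_zero, mul_zero, sub_zero])
    calc (∑ᶠ k : ℕ, ∑ᶠ ℓ : ℕ,
          ((⇑d)^[ℓ] (pderiv (Sum.inl i, k) p) * (⇑d)^[k] (pderiv (Sum.inr i, ℓ) q)
            - (⇑d)^[ℓ] (pderiv (Sum.inr i, k) p) * (⇑d)^[k] (pderiv (Sum.inl i, ℓ) q)))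
        = ∑ᶠ k : ℕ, ∑ ℓ ∈ Finset.range (M+1),
          ((⇑d)^[ℓ] (pderiv (Sum.inl i, k) p) * (⇑d)^[k] (pderiv (Sum.inr i, ℓ) q)
            - (⇑d)^[ℓ] (pderiv (Sum.inr i, k) p) * (⇑d)^[k] (pderiv (Sum.inl i, ℓ) q)) :=
          finsum_congr inner
      _ = A p q i := by
          refine finsum_eq_sum_of_support_subset _ ?_
          intro k hk
          simp only [Function.mem_support] at hk
          simp only [Finset.coe_range, Set.mem_Iio]
          by_contra hc
          push_neg at hc
          refine hk (Finset.sum_eq_zero fun ℓ _ => ?_)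
          rw [hp _ _ hc, hp _ _ hc, it_zero, zero_mul, zero_mul, sub_zero]
  -- support of A f g is contained in I
  set I : Finset ι := (f.vars ∪ g.vars).image (fun p => Sum.elim id id p.1) with hI
  have hIvar : ∀ (i : ι), i ∉ I → ∀ (j : ι ⊕ ι) (k : ℕ), Sum.elim id id j = i →
      pderiv (j, k) f = 0 ∧ pderiv (j, k) g = 0 := by
    intro i hi j k hj
    constructor <;> apply pderiv_eq_zero_of_notMem_vars <;> intro hmem
    · exact hi (Finset.mem_image.mpr ⟨(j, k), Finset.mem_union_left _ hmem, hj⟩)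
    · exact hi (Finset.mem_image.mpr ⟨(j, k), Finset.mem_union_right _ hmem, hj⟩)
  have hApq : ∀ (p q : DiffPoly ι) (i : ι),
      (∀ k : ℕ, pderiv ((Sum.inl i : ι ⊕ ι), k) p = 0) →
      (∀ k : ℕ, pderiv ((Sum.inr i : ι ⊕ ι), k) p = 0) → A p q i = 0 := by
    intro p q i h1 h2
    refine Finset.sum_eq_zero fun k _ => Finset.sum_eq_zero fun ℓ _ => ?_
    rw [h1 k, h2 k, it_zero, zero_mul, zero_mul, sub_zero]
  have hsub : ∀ (p q : DiffPoly ι),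
      (∀ (i : ι), i ∉ I → ∀ k : ℕ, pderiv ((Sum.inl i : ι ⊕ ι), k) p = 0
        ∧ pderiv ((Sum.inr i : ι ⊕ ι), k) p = 0) →
      (∑ᶠ i : ι, A p q i) = ∑ i ∈ I, A p q i := by
    intro p q hp
    refine finsum_eq_sum_of_support_subset _ ?_
    intro i hi
    simp only [Function.mem_support] at hi
    by_contra hc
    exact hi (hApq p q i (fun k => (hp i hc k).1) (fun k => (hp i hc k).2))
  have hsubf : ∀ (i : ι), i ∉ I → ∀ k : ℕ, pderiv ((Sum.inl i : ι ⊕ ι), k) f = 0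
      ∧ pderiv ((Sum.inr i : ι ⊕ ι), k) f = 0 := fun i hi k =>
    ⟨(hIvar i hi (Sum.inl i) k rfl).1, (hIvar i hi (Sum.inr i) k rfl).1⟩
  have hsubdf : ∀ (i : ι), i ∉ I → ∀ k : ℕ, pderiv ((Sum.inl i : ι ⊕ ι), k) (d f) = 0
      ∧ pderiv ((Sum.inr i : ι ⊕ ι), k) (d f) = 0 := by
    intro i hi k
    constructor <;> rw [pderiv_d d hd]
    · rw [(hsubf i hi k).1, map_zero, zero_add]
      cases k with
      | zero => rfl
      | succ k => exact (hsubf i hi k).1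
    · rw [(hsubf i hi k).2, map_zero, zero_add]
      cases k with
      | zero => rfl
      | succ k => exact (hsubf i hi k).2
  have hsubdg : ∀ (i : ι), i ∉ I → ∀ k : ℕ, pderiv ((Sum.inl i : ι ⊕ ι), k) (d g) = 0
      ∧ pderiv ((Sum.inr i : ι ⊕ ι), k) (d g) = 0 := by
    intro i hi k
    have h1 := (hIvar i hi (Sum.inl i) k rfl).2
    have h2 := (hIvar i hi (Sum.inr i) k rfl).2
    constructor <;> rw [pderiv_d d hd]
    · rw [h1, map_zero, zero_add]
      cases k with
      | zero => rfl
      | succ k => exact (hIvar i hi (Sum.inl i) k rfl).2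
    · rw [h2, map_zero, zero_add]
      cases k with
      | zero => rfl
      | succ k => exact (hIvar i hi (Sum.inr i) k rfl).2
  -- per-index identities
  have per1 : ∀ i : ι, A (d f) g i = d (A f g i) := by
    intro i
    simp only [hA]
    simp_rw [pderiv_d d hd]
    exact core2 d M (fun k => pderiv (Sum.inl i, k) f) (fun ℓ => pderiv (Sum.inr i, ℓ) g)
      (fun k => pderiv (Sum.inr i, k) f) (fun ℓ => pderiv (Sum.inl i, ℓ) g)
      (hvf _ _ le_rfl) (hvf _ _ le_rfl)
  have per2 : ∀ i : ι, A f (d g) i = d (A f g i) := by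
    intro i
    simp only [hA]
    simp_rw [pderiv_d d hd]
    exact core2r d M (fun k => pderiv (Sum.inl i, k) f) (fun ℓ => pderiv (Sum.inr i, ℓ) g)
      (fun k => pderiv (Sum.inr i, k) f) (fun ℓ => pderiv (Sum.inl i, ℓ) g)
      (hvg _ _ le_rfl) (hvg _ _ le_rfl)
  have hb0 : solovievBracket d f g = ∑ i ∈ I, A f g i := by
    rw [brkt f g (fun s k hk => hvf s k (by omega)) (fun s k hk => hvg s k (by omega)),
      hsub f g hsubf]
  constructor
  · rw [brkt (d f) g hvdf (fun s k hk => hvg s k (by omega)), hsub (d f) g hsubdf, hb0, map_sum]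
    exact Finset.sum_congr rfl fun i _ => per1 i
  · rw [brkt f (d g) (fun s k hk => hvf s k (by omega)) hvdg, hsub f (d g) ?hlast, hb0, map_sum]
    · exact Finset.sum_congr rfl fun i _ => per2 i
    · intro i hi k
      exact ⟨(hsubf i hi k).1, (hsubf i hi k).2⟩

end
end

section
/- Let ι be a type and let R := MvPolynomial ((ι ⊕ ι) × ℕ) ℚ, with field variables u_{i,k} := X(inl i, k) and antifield variables v_{i,k} := X(inr i, k). Let d : R → R be the unique derivation with d(X(s,k)) = X(s,k+1). Define the (even, ungraded analogue of the) Soloviev bracket [f,g] := ∑_{i,k,ℓ} ( d^ℓ(pderiv(inl i,k) f)·d^k(pderiv(inr i,ℓ) g) − d^ℓ(pderiv(inr i,k) f)·d^k(pderiv(inl i,ℓ) g) ). Then the bracket satisfies the Jacobi identity: [f, [g, h]] = [[f, g], h] + [g, [f, h]] for all f, g, h ∈ R. -/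
open MvPolynomial

noncomputable section

namespace Stmt6Aux

open Finset

variable {ι : Type*}

/-- swap fields and antifields -/
def sw : ι ⊕ ι → ι ⊕ ι := Sum.elim Sum.inr Sum.inl

/-- sign: `+1` on fields, `-1` on antifields -/
def sg : ι ⊕ ι → ℚ := Sum.elim (fun _ => 1) (fun _ => -1)

/-- underlying index -/
def core : ι ⊕ ι → ι := Sum.elim id id

@[simp] lemma sw_sw (t : ι ⊕ ι) : sw (sw t) = t := by cases t <;> rfl
@[simp] lemma sg_sw (t : ι ⊕ ι) : sg (sw t) = - sg t := by cases t <;> simp [sw, sg]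
@[simp] lemma sw_inl (i : ι) : sw (Sum.inl i : ι ⊕ ι) = Sum.inr i := rfl
@[simp] lemma sw_inr (i : ι) : sw (Sum.inr i : ι ⊕ ι) = Sum.inl i := rfl
@[simp] lemma sg_inl (i : ι) : sg (Sum.inl i : ι ⊕ ι) = 1 := rfl
@[simp] lemma sg_inr (i : ι) : sg (Sum.inr i : ι ⊕ ι) = -1 := rfl
@[simp] lemma core_inl (i : ι) : core (Sum.inl i : ι ⊕ ι) = i := rfl
@[simp] lemma core_inr (i : ι) : core (Sum.inr i : ι ⊕ ι) = i := rfl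
@[simp] lemma core_sw (t : ι ⊕ ι) : core (sw t) = core t := by cases t <;> rfl

lemma mem_disjSum_sw {S : Finset ι} {t : ι ⊕ ι} (h : t ∈ S.disjSum S) :
    sw t ∈ S.disjSum S := by
  cases t <;> simp_all [Finset.mem_disjSum, sw]

variable (d : Derivation ℚ (DiffPoly ι) (DiffPoly ι))

lemma iter_add (n : ℕ) (a b : DiffPoly ι) :
    (⇑d)^[n] (a + b) = (⇑d)^[n] a + (⇑d)^[n] b := by
  induction n generalizing a b with
  | zero => rfl
  | succ n ih => rw [Function.iterate_succ_apply, Function.iterate_succ_apply,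
      Function.iterate_succ_apply, map_add, ih]

@[simp] lemma iter_zero (n : ℕ) : (⇑d)^[n] (0 : DiffPoly ι) = 0 := by
  induction n with
  | zero => rfl
  | succ n ih => rw [Function.iterate_succ_apply, map_zero, ih]

lemma iter_smul (n : ℕ) (q : ℚ) (a : DiffPoly ι) :
    (⇑d)^[n] (q • a) = q • (⇑d)^[n] a := by
  induction n generalizing a with
  | zero => rfl
  | succ n ih => rw [Function.iterate_succ_apply, Function.iterate_succ_apply,
      Derivation.map_smul, ih]

lemma iter_sum {α : Type*} (n : ℕ) (s : Finset α) (F : α → DiffPoly ι) :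
    (⇑d)^[n] (∑ a ∈ s, F a) = ∑ a ∈ s, (⇑d)^[n] (F a) := by
  classical
  induction s using Finset.induction_on with
  | empty => simp
  | insert _ _ h ih => rw [Finset.sum_insert h, Finset.sum_insert h, iter_add, ih]

/-- commutativity of partial derivatives -/
lemma pdc (a b : (ι ⊕ ι) × ℕ) (f : DiffPoly ι) :
    pderiv a (pderiv b f) = pderiv b (pderiv a f) := by
  classical
  induction f using MvPolynomial.induction_on with
  | C c => simp
  | add p q hp hq => simp [hp, hq]
  | mul_X p n ih =>
    simp only [pderiv_mul, map_add, pderiv_mul, ih]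
    by_cases hna : n = a <;> by_cases hnb : n = b <;> by_cases hab : a = b <;>
      simp [hna, hnb, hab, pderiv_X, Pi.single_apply, pderiv_one] <;> ring

/-- adequacy of a bound `(S, N)` for a differential polynomial -/
def Good (S : Finset ι) (N : ℕ) (x : DiffPoly ι) : Prop :=
  ∀ (c : ι ⊕ ι) (k : ℕ), (core c ∉ S ∨ N ≤ k) → pderiv (c, k) x = 0


section WithD

variable (hd : ∀ (s : ι ⊕ ι) (k : ℕ), d (X (s, k)) = X (s, k + 1))

include hd in
lemma pd_d_zero (t : ι ⊕ ι) (x : DiffPoly ι) :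
    pderiv (t, 0) (d x) = d (pderiv (t, 0) x) := by
  classical
  have key : ⁅(pderiv (t, 0) : Derivation ℚ (DiffPoly ι) (DiffPoly ι)), d⁆ = 0 := by
    apply MvPolynomial.derivation_ext
    rintro ⟨s, k⟩
    rw [Derivation.commutator_apply, hd s k]
    have h1 : ¬ (((s, k+1) : (ι⊕ι)×ℕ) = (t, 0)) := by
      intro hc; exact Nat.succ_ne_zero k (congrArg Prod.snd hc)
    by_cases h : ((s, k) : (ι⊕ι)×ℕ) = (t, 0) <;>
      simp [pderiv_X, Pi.single_apply, h, h1, apply_ite (⇑d)]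
  have h2 := DFunLike.congr_fun key x
  rw [Derivation.commutator_apply] at h2
  simpa [sub_eq_zero] using h2

include hd in
lemma pd_d_succ (t : ι ⊕ ι) (m : ℕ) (x : DiffPoly ι) :
    pderiv (t, m + 1) (d x) = d (pderiv (t, m + 1) x) + pderiv (t, m) x := by
  classical
  have key : ⁅(pderiv (t, m+1) : Derivation ℚ (DiffPoly ι) (DiffPoly ι)), d⁆
      = pderiv (t, m) := by
    apply MvPolynomial.derivation_ext
    rintro ⟨s, k⟩
    rw [Derivation.commutator_apply, hd s k]
    have h1 : (((s, k+1) : (ι⊕ι)×ℕ) = (t, m+1)) ↔ (((s, k) : (ι⊕ι)×ℕ) = (t, m)) := by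
      simp only [Prod.ext_iff, Nat.add_right_cancel_iff]
    by_cases h : ((s, k) : (ι⊕ι)×ℕ) = (t, m) <;>
      simp [pderiv_X, Pi.single_apply, h, h1, apply_ite (⇑d)]
  have h2 := DFunLike.congr_fun key x
  rw [Derivation.commutator_apply] at h2
  exact sub_eq_iff_eq_add'.mp h2

include hd in
lemma pd_d (t : ι ⊕ ι) (m : ℕ) (x : DiffPoly ι) :
    pderiv (t, m) (d x)
      = d (pderiv (t, m) x) + (if m = 0 then 0 else pderiv (t, m - 1) x) := by
  cases m with
  | zero => simp [pd_d_zero d hd t x]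
  | succ m => simp [pd_d_succ d hd t m x]

include hd in
/-- binomial commutation of `pderiv` past iterates of `d` -/
lemma pderiv_iter (t : ι ⊕ ι) (n m : ℕ) (x : DiffPoly ι) :
    pderiv (t, m) ((⇑d)^[n] x)
      = ∑ j ∈ Finset.range (m+1),
          ((n.choose j : ℚ)) • (⇑d)^[n - j] (pderiv (t, m - j) x) := by
  induction n generalizing x with
  | zero =>
    rw [Finset.sum_eq_single 0]
    · simp
    · intro j _ hj
      rcases Nat.exists_eq_succ_of_ne_zero hj with ⟨j', rfl⟩
      simp
    · intro h; simp at h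
  | succ n ih =>
    rw [Function.iterate_succ_apply, ih (d x)]
    have step : ∀ j ∈ Finset.range (m+1),
        ((n.choose j : ℚ)) • (⇑d)^[n - j] (pderiv (t, m - j) (d x))
          = (((n.choose j : ℚ)) • (⇑d)^[(n+1) - j] (pderiv (t, m - j) x))
            + ((n.choose j : ℚ)) • (⇑d)^[n - j]
                (if m - j = 0 then 0 else pderiv (t, m - j - 1) x) := by
      intro j _
      rw [pd_d d hd t (m-j) x, iter_add, smul_add]
      congr 1
      by_cases hj : j ≤ n
      · have h1 : (⇑d)^[(n+1) - j] (pderiv (t, m - j) x)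
            = (⇑d)^[n - j] (d (pderiv (t, m - j) x)) := by
          have : (n+1) - j = (n - j) + 1 := by omega
          rw [this, Function.iterate_succ_apply]
        rw [h1]
      · have h0 : n.choose j = 0 := Nat.choose_eq_zero_of_lt (by omega)
        simp [h0]
    rw [Finset.sum_congr rfl step, Finset.sum_add_distrib]
    -- second sum: only j < m contributes, shift index
    have e2 : ∑ j ∈ Finset.range (m+1), ((n.choose j : ℚ)) • (⇑d)^[n - j]
          (if m - j = 0 then 0 else pderiv (t, m - j - 1) x)
        = ∑ j ∈ Finset.range m, ((n.choose j : ℚ)) • (⇑d)^[n - j]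
            (pderiv (t, m - j - 1) x) := by
      rw [Finset.sum_range_succ]
      simp only [Nat.sub_self, if_true, iter_zero, smul_zero, add_zero]
      apply Finset.sum_congr rfl
      intro j hj
      rw [Finset.mem_range] at hj
      rw [if_neg (by omega)]
    rw [e2]
    -- target: split by Pascal
    have target : ∑ j ∈ Finset.range (m+1),
          (((n+1).choose j : ℚ)) • (⇑d)^[(n+1) - j] (pderiv (t, m - j) x)
        = (∑ j ∈ Finset.range (m+1), ((n.choose j : ℚ)) • (⇑d)^[(n+1) - j] (pderiv (t, m - j) x))
          + ∑ j ∈ Finset.range m, ((n.choose j : ℚ)) • (⇑d)^[n - j] (pderiv (t, m - j - 1) x) := by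
      rw [Finset.sum_range_succ', Finset.sum_range_succ']
      have pas : ∀ j, (((n+1).choose (j+1) : ℚ)) = (n.choose (j+1) : ℚ) + (n.choose j : ℚ) := by
        intro j; rw [Nat.choose_succ_succ]; push_cast; ring
      simp only [pas, add_smul, Nat.choose_zero_right]
      rw [Finset.sum_add_distrib]
      have shift : ∀ j ∈ Finset.range m,
          ((n.choose j : ℚ)) • (⇑d)^[(n+1) - (j+1)] (pderiv (t, m - (j+1)) x)
            = ((n.choose j : ℚ)) • (⇑d)^[n - j] (pderiv (t, m - j - 1) x) := by
        intro j _
        simp only [Nat.succ_sub_succ_eq_sub, Nat.sub_sub]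
      rw [Finset.sum_congr rfl shift]
      ring
    rw [target]

/-- iterated Leibniz rule -/
lemma iter_mul (n : ℕ) (a b : DiffPoly ι) :
    (⇑d)^[n] (a * b)
      = ∑ p ∈ Finset.range (n+1),
          ((n.choose p : ℚ)) • ((⇑d)^[p] a * (⇑d)^[n - p] b) := by
  induction n with
  | zero => simp
  | succ n ih =>
    rw [Function.iterate_succ_apply', ih, map_sum]
    have step : ∀ p ∈ Finset.range (n+1),
        d (((n.choose p : ℚ)) • ((⇑d)^[p] a * (⇑d)^[n - p] b))
          = ((n.choose p : ℚ)) • ((⇑d)^[p+1] a * (⇑d)^[n - p] b)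
            + ((n.choose p : ℚ)) • ((⇑d)^[p] a * (⇑d)^[(n - p) + 1] b) := by
      intro p _
      rw [Derivation.map_smul, Derivation.leibniz, smul_eq_mul, smul_eq_mul,
        Function.iterate_succ_apply', Function.iterate_succ_apply', ← smul_add]
      congr 1
      ring
    rw [Finset.sum_congr rfl step, Finset.sum_add_distrib]
    have e2 : (∑ p ∈ Finset.range (n+1),
          ((n.choose p : ℚ)) • ((⇑d)^[p] a * (⇑d)^[(n - p) + 1] b))
        = ((1:ℚ)) • (a * (⇑d)^[n+1] b)
          + ∑ p ∈ Finset.range n,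
              ((n.choose (p+1) : ℚ)) • ((⇑d)^[p+1] a * (⇑d)^[n - p] b) := by
      rw [Finset.sum_range_succ']
      rw [add_comm]
      congr 1
      · norm_num
      · apply Finset.sum_congr rfl
        intro p hp
        rw [Finset.mem_range] at hp
        have : n - (p+1) + 1 = n - p := by omega
        rw [this]
    rw [e2]
    have target : ∑ p ∈ Finset.range (n+2),
          (((n+1).choose p : ℚ)) • ((⇑d)^[p] a * (⇑d)^[(n+1) - p] b)
        = (∑ p ∈ Finset.range (n+1),
            ((n.choose p : ℚ)) • ((⇑d)^[p+1] a * (⇑d)^[n - p] b))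
          + (((1:ℚ)) • (a * (⇑d)^[n+1] b)
            + ∑ p ∈ Finset.range n,
                ((n.choose (p+1) : ℚ)) • ((⇑d)^[p+1] a * (⇑d)^[n - p] b)) := by
      rw [Finset.sum_range_succ']
      have pas : ∀ p, (((n+1).choose (p+1) : ℚ)) = (n.choose p : ℚ) + (n.choose (p+1) : ℚ) := by
        intro p; rw [Nat.choose_succ_succ]; push_cast; ring
      simp only [pas, add_smul, Nat.succ_sub_succ_eq_sub, Nat.choose_zero_right,
        Nat.cast_one, Finset.sum_add_distrib]
      rw [Finset.sum_range_succ (fun p => ((n.choose (p+1) : ℚ)) • ((⇑d)^[p+1] a * (⇑d)^[n - p] b)) n]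
      have : (n.choose (n+1) : ℚ) = 0 := by
        rw [Nat.choose_eq_zero_of_lt (by omega)]; norm_num
      rw [this, zero_smul, add_zero]
      simp only [Function.iterate_zero_apply, Nat.sub_zero]
      ring
    rw [target]

lemma bracket_eq {S : Finset ι} {Nf Ng : ℕ} {f g : DiffPoly ι}
    (hf : Good S Nf f) (hg : Good S Ng g) :
    solovievBracket d f g
      = ∑ t ∈ S.disjSum S, ∑ k ∈ Finset.range Nf, ∑ l ∈ Finset.range Ng,
          sg t • ((⇑d)^[l] (pderiv (t, k) f) * (⇑d)^[k] (pderiv (sw t, l) g)) := by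
  unfold solovievBracket
  have hinner : ∀ (i : ι) (k : ℕ),
      (∑ᶠ ℓ : ℕ, ((⇑d)^[ℓ] (pderiv (Sum.inl i, k) f) * (⇑d)^[k] (pderiv (Sum.inr i, ℓ) g)
        - (⇑d)^[ℓ] (pderiv (Sum.inr i, k) f) * (⇑d)^[k] (pderiv (Sum.inl i, ℓ) g)))
      = ∑ ℓ ∈ Finset.range Ng,
          ((⇑d)^[ℓ] (pderiv (Sum.inl i, k) f) * (⇑d)^[k] (pderiv (Sum.inr i, ℓ) g)
            - (⇑d)^[ℓ] (pderiv (Sum.inr i, k) f) * (⇑d)^[k] (pderiv (Sum.inl i, ℓ) g)) := by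
    intro i k
    apply finsum_eq_sum_of_support_subset
    intro ℓ hℓ
    simp only [Function.mem_support] at hℓ
    simp only [Finset.coe_range, Set.mem_Iio]
    by_contra hc
    push_neg at hc
    rw [hg (Sum.inr i) ℓ (Or.inr hc), hg (Sum.inl i) ℓ (Or.inr hc)] at hℓ
    simp at hℓ
  have hmid : ∀ i : ι,
      (∑ᶠ k : ℕ, ∑ ℓ ∈ Finset.range Ng,
          ((⇑d)^[ℓ] (pderiv (Sum.inl i, k) f) * (⇑d)^[k] (pderiv (Sum.inr i, ℓ) g)
            - (⇑d)^[ℓ] (pderiv (Sum.inr i, k) f) * (⇑d)^[k] (pderiv (Sum.inl i, ℓ) g)))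
      = ∑ k ∈ Finset.range Nf, ∑ ℓ ∈ Finset.range Ng,
          ((⇑d)^[ℓ] (pderiv (Sum.inl i, k) f) * (⇑d)^[k] (pderiv (Sum.inr i, ℓ) g)
            - (⇑d)^[ℓ] (pderiv (Sum.inr i, k) f) * (⇑d)^[k] (pderiv (Sum.inl i, ℓ) g)) := by
    intro i
    apply finsum_eq_sum_of_support_subset
    intro k hk
    simp only [Function.mem_support] at hk
    simp only [Finset.coe_range, Set.mem_Iio]
    by_contra hc
    push_neg at hc
    apply hk
    apply Finset.sum_eq_zero
    intro l _
    rw [hf (Sum.inl i) k (Or.inr hc), hf (Sum.inr i) k (Or.inr hc)]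
    simp
  have houter :
      (∑ᶠ i : ι, ∑ k ∈ Finset.range Nf, ∑ ℓ ∈ Finset.range Ng,
          ((⇑d)^[ℓ] (pderiv (Sum.inl i, k) f) * (⇑d)^[k] (pderiv (Sum.inr i, ℓ) g)
            - (⇑d)^[ℓ] (pderiv (Sum.inr i, k) f) * (⇑d)^[k] (pderiv (Sum.inl i, ℓ) g)))
      = ∑ i ∈ S, ∑ k ∈ Finset.range Nf, ∑ ℓ ∈ Finset.range Ng,
          ((⇑d)^[ℓ] (pderiv (Sum.inl i, k) f) * (⇑d)^[k] (pderiv (Sum.inr i, ℓ) g)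
            - (⇑d)^[ℓ] (pderiv (Sum.inr i, k) f) * (⇑d)^[k] (pderiv (Sum.inl i, ℓ) g)) := by
    apply finsum_eq_sum_of_support_subset
    intro i hi
    simp only [Function.mem_support] at hi
    simp only [Finset.mem_coe]
    by_contra hc
    apply hi
    apply Finset.sum_eq_zero; intro k _
    apply Finset.sum_eq_zero; intro l _
    rw [hf (Sum.inl i) k (Or.inl (by simpa using hc)), hf (Sum.inr i) k (Or.inl (by simpa using hc))]
    simp
  rw [finsum_congr (fun i => finsum_congr (fun k => hinner i k)),
    finsum_congr hmid, houter, Finset.sum_disjSum, ← Finset.sum_add_distrib]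
  apply Finset.sum_congr rfl
  intro i _
  rw [← Finset.sum_add_distrib]
  apply Finset.sum_congr rfl
  intro k _
  rw [← Finset.sum_add_distrib]
  apply Finset.sum_congr rfl
  intro l _
  simp only [sw_inl, sw_inr, sg_inl, sg_inr, one_smul, neg_smul, sub_eq_add_neg]

include hd in
lemma good_bracket {S : Finset ι} {N : ℕ} {y z : DiffPoly ι}
    (hy : Good S N y) (hz : Good S N z) :
    Good S (2*N) (solovievBracket d y z) := by
  intro c k hck
  have hzero : ∀ (w : DiffPoly ι), Good S N w → ∀ (l : ℕ), l < N → ∀ (a : (ι⊕ι)×ℕ),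
      pderiv (c,k) ((⇑d)^[l] (pderiv a w)) = 0 := by
    intro w hw l hlN a
    rw [pderiv_iter d hd c l k]
    apply Finset.sum_eq_zero
    intro j _
    by_cases hj : j ≤ l
    · rw [pdc]
      have : pderiv (c, k - j) w = 0 := by
        rcases hck with h | h
        · exact hw c (k-j) (Or.inl h)
        · exact hw c (k-j) (Or.inr (by omega))
      rw [this, map_zero, iter_zero, smul_zero]
    · have : l.choose j = 0 := Nat.choose_eq_zero_of_lt (by omega)
      rw [this]
      simp
  rw [bracket_eq d hy hz, map_sum]
  apply Finset.sum_eq_zero; intro t _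
  rw [map_sum]
  apply Finset.sum_eq_zero; intro k' hk'
  rw [map_sum]
  apply Finset.sum_eq_zero; intro l hl
  rw [Finset.mem_range] at hk' hl
  rw [Derivation.map_smul, pderiv_mul,
    hzero y hy l hl (t, k'), hzero z hz k' hk' (sw t, l)]
  simp

lemma sum_disjSum_sw {M : Type*} [AddCommMonoid M] (S : Finset ι) (F : ι ⊕ ι → M) :
    ∑ t ∈ S.disjSum S, F t = ∑ t ∈ S.disjSum S, F (sw t) := by
  rw [Finset.sum_disjSum, Finset.sum_disjSum]
  simp only [sw_inl, sw_inr]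
  exact add_comm _ _

lemma bracket_antisymm {S : Finset ι} {N : ℕ} {a b : DiffPoly ι}
    (ha : Good S N a) (hb : Good S N b) :
    solovievBracket d a b = - solovievBracket d b a := by
  rw [bracket_eq d ha hb, bracket_eq d hb ha]
  rw [sum_disjSum_sw S (fun t => ∑ k ∈ Finset.range N, ∑ l ∈ Finset.range N,
      sg t • ((⇑d)^[l] (pderiv (t, k) b) * (⇑d)^[k] (pderiv (sw t, l) a)))]
  rw [← Finset.sum_neg_distrib]
  apply Finset.sum_congr rfl
  intro t _
  rw [Finset.sum_comm, ← Finset.sum_neg_distrib]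
  apply Finset.sum_congr rfl
  intro u _
  rw [← Finset.sum_neg_distrib]
  apply Finset.sum_congr rfl
  intro v _
  simp only [sg_sw, sw_sw, neg_smul, neg_inj, neg_neg]
  rw [mul_comm]


abbrev Idx (ι : Type*) := (ι ⊕ ι) × ((ι ⊕ ι) × (ℕ × (ℕ × (ℕ × (ℕ × (ℕ × ℕ))))))

def rect (S : Finset ι) (N : ℕ) : Finset (Idx ι) :=
  (S.disjSum S) ×ˢ ((S.disjSum S) ×ˢ (Finset.range N ×ˢ (Finset.range (2*N) ×ˢ
    (Finset.range N ×ˢ (Finset.range N ×ˢ (Finset.range (2*N) ×ˢ Finset.range N))))))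

def qTerm (x y z : DiffPoly ι) : Idx ι → DiffPoly ι := fun w =>
  match w with
  | (t, s, m, n, k, l, j, p) =>
    (sg t * sg s * (k.choose j) * (m.choose p) : ℚ) •
      ((⇑d)^[n] (pderiv (t, m) x)
        * ((⇑d)^[p + l] (pderiv (s, k) y)
          * (⇑d)^[(m - p) + (k - j)] (pderiv (sw t, n - j) (pderiv (sw s, l) z))))

def pTerm (x y z : DiffPoly ι) : Idx ι → DiffPoly ι := fun w =>
  match w with
  | (t, s, m, n, k, l, j, p) =>
    (sg t * sg s * (l.choose j) * (m.choose p) : ℚ) •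
      ((⇑d)^[n] (pderiv (t, m) x)
        * ((⇑d)^[(p + l) - j] (pderiv (sw t, n - j) (pderiv (s, k) y))
          * (⇑d)^[(m - p) + k] (pderiv (sw s, l) z)))
open scoped Classical in
noncomputable def qSet (S : Finset ι) (N : ℕ) : Finset (Idx ι) :=
  (rect S N).filter (fun w =>
    match w with
    | (_, _, m, n, k, _, j, p) => j ≤ k ∧ j ≤ n ∧ n < N + j ∧ p ≤ m)

open scoped Classical in
noncomputable def pSet (S : Finset ι) (N : ℕ) : Finset (Idx ι) :=
  (rect S N).filter (fun w =>
    match w with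
    | (_, _, m, n, _, l, j, p) => j ≤ l ∧ j ≤ n ∧ n < N + j ∧ p ≤ m)

lemma mem_qSet {S : Finset ι} {N : ℕ} {t s : ι ⊕ ι} {m n k l j p : ℕ} :
    ((t, s, m, n, k, l, j, p) : Idx ι) ∈ qSet S N
      ↔ (t ∈ S.disjSum S ∧ s ∈ S.disjSum S ∧ m < N ∧ n < 2*N ∧ k < N ∧ l < N
          ∧ j < 2*N ∧ p < N) ∧ (j ≤ k ∧ j ≤ n ∧ n < N + j ∧ p ≤ m) := by
  simp [qSet, rect, Finset.mem_filter, Finset.mem_product, Finset.mem_range, and_assoc]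

lemma mem_pSet {S : Finset ι} {N : ℕ} {t s : ι ⊕ ι} {m n k l j p : ℕ} :
    ((t, s, m, n, k, l, j, p) : Idx ι) ∈ pSet S N
      ↔ (t ∈ S.disjSum S ∧ s ∈ S.disjSum S ∧ m < N ∧ n < 2*N ∧ k < N ∧ l < N
          ∧ j < 2*N ∧ p < N) ∧ (j ≤ l ∧ j ≤ n ∧ n < N + j ∧ p ≤ m) := by
  simp [pSet, rect, Finset.mem_filter, Finset.mem_product, Finset.mem_range, and_assoc]

/-- the symmetry of the `Q`-part in its first two arguments -/
lemma q_symm (S : Finset ι) (N : ℕ) (x y z : DiffPoly ι) :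
    ∑ w ∈ qSet S N, qTerm d x y z w = ∑ w ∈ qSet S N, qTerm d y x z w := by
  apply Finset.sum_nbij'
    (i := fun w => match w with
      | (t, s, m, n, k, l, j, p) => ((s, t, k, p + l, m, n - j, p, j) : Idx ι))
    (j := fun w => match w with
      | (t, s, m, n, k, l, j, p) => ((s, t, k, p + l, m, n - j, p, j) : Idx ι))
  case hi =>
    rintro ⟨t, s, m, n, k, l, j, p⟩ hw
    rw [mem_qSet] at hw ⊢
    obtain ⟨⟨h1, h2, h3, h4, h5, h6, h7, h8⟩, hj1, hj2, hj3, hj4⟩ := hw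
    refine ⟨⟨h2, h1, by omega, by omega, by omega, by omega, by omega, by omega⟩,
      by omega, by omega, by omega, by omega⟩
  case hj =>
    rintro ⟨t, s, m, n, k, l, j, p⟩ hw
    rw [mem_qSet] at hw ⊢
    obtain ⟨⟨h1, h2, h3, h4, h5, h6, h7, h8⟩, hj1, hj2, hj3, hj4⟩ := hw
    refine ⟨⟨h2, h1, by omega, by omega, by omega, by omega, by omega, by omega⟩,
      by omega, by omega, by omega, by omega⟩
  case left_neg =>
    rintro ⟨t, s, m, n, k, l, j, p⟩ hw
    rw [mem_qSet] at hw
    obtain ⟨⟨h1, h2, h3, h4, h5, h6, h7, h8⟩, hj1, hj2, hj3, hj4⟩ := hw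
    have e1 : p + l - p = l := by omega
    have e2 : j + (n - j) = n := by omega
    simp only [e1, e2, Prod.mk.injEq]
  case right_neg =>
    rintro ⟨t, s, m, n, k, l, j, p⟩ hw
    rw [mem_qSet] at hw
    obtain ⟨⟨h1, h2, h3, h4, h5, h6, h7, h8⟩, hj1, hj2, hj3, hj4⟩ := hw
    have e1 : p + l - p = l := by omega
    have e2 : j + (n - j) = n := by omega
    simp only [e1, e2, Prod.mk.injEq]
  case h =>
    rintro ⟨t, s, m, n, k, l, j, p⟩ hw
    rw [mem_qSet] at hw
    obtain ⟨⟨h1, h2, h3, h4, h5, h6, h7, h8⟩, hj1, hj2, hj3, hj4⟩ := hw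
    show qTerm d x y z _ = qTerm d y x z _
    simp only [qTerm]
    have e1 : p + l - p = l := by omega
    have e2 : j + (n - j) = n := by omega
    have e3 : (k - j) + (m - p) = (m - p) + (k - j) := by omega
    rw [e1, e2, e3, pdc]
    simp only [smul_eq_C_mul, map_mul]
    ring

/-- the `P`-part is a reshuffling of the `Q`-part -/
lemma p_eq_neg_q (S : Finset ι) (N : ℕ) (x y z : DiffPoly ι) :
    ∑ w ∈ pSet S N, pTerm d x y z w = - ∑ w ∈ qSet S N, qTerm d x z y w := by
  rw [← Finset.sum_neg_distrib]
  apply Finset.sum_nbij'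
    (i := fun w => match w with
      | (t, s, m, n, k, l, j, p) => ((t, sw s, m, n, l, k, j, m - p) : Idx ι))
    (j := fun w => match w with
      | (t, s, m, n, k, l, j, p) => ((t, sw s, m, n, l, k, j, m - p) : Idx ι))
  case hi =>
    rintro ⟨t, s, m, n, k, l, j, p⟩ hw
    rw [mem_pSet] at hw
    rw [mem_qSet]
    obtain ⟨⟨h1, h2, h3, h4, h5, h6, h7, h8⟩, hj1, hj2, hj3, hj4⟩ := hw
    exact ⟨⟨h1, mem_disjSum_sw h2, by omega, by omega, by omega, by omega, by omega, by omega⟩,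
      by omega, by omega, by omega, by omega⟩
  case hj =>
    rintro ⟨t, s, m, n, k, l, j, p⟩ hw
    rw [mem_qSet] at hw
    rw [mem_pSet]
    obtain ⟨⟨h1, h2, h3, h4, h5, h6, h7, h8⟩, hj1, hj2, hj3, hj4⟩ := hw
    exact ⟨⟨h1, mem_disjSum_sw h2, by omega, by omega, by omega, by omega, by omega, by omega⟩,
      by omega, by omega, by omega, by omega⟩
  case left_neg =>
    rintro ⟨t, s, m, n, k, l, j, p⟩ hw
    rw [mem_pSet] at hw
    obtain ⟨⟨h1, h2, h3, h4, h5, h6, h7, h8⟩, hj1, hj2, hj3, hj4⟩ := hw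
    have e1 : m - (m - p) = p := by omega
    simp only [sw_sw, e1, Prod.mk.injEq]
  case right_neg =>
    rintro ⟨t, s, m, n, k, l, j, p⟩ hw
    rw [mem_qSet] at hw
    obtain ⟨⟨h1, h2, h3, h4, h5, h6, h7, h8⟩, hj1, hj2, hj3, hj4⟩ := hw
    have e1 : m - (m - p) = p := by omega
    simp only [sw_sw, e1, Prod.mk.injEq]
  case h =>
    rintro ⟨t, s, m, n, k, l, j, p⟩ hw
    rw [mem_pSet] at hw
    obtain ⟨⟨h1, h2, h3, h4, h5, h6, h7, h8⟩, hj1, hj2, hj3, hj4⟩ := hw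
    show pTerm d x y z _ = - qTerm d x z y _
    simp only [qTerm, pTerm]
    have e1 : m - (m - p) = p := by omega
    have e2 : p + (l - j) = (p + l) - j := by omega
    have e3 : m.choose (m - p) = m.choose p := Nat.choose_symm hj4
    simp only [sw_sw, e1, e2, e3, sg_sw]
    simp only [smul_eq_C_mul, map_mul, map_neg]
    ring


include hd in
lemma expand_term (x y z : DiffPoly ι) (t s : ι ⊕ ι) (m n k l : ℕ) :
    sg t • ((⇑d)^[n] (pderiv (t,m) x)
      * (⇑d)^[m] (pderiv (sw t, n)
          (sg s • ((⇑d)^[l] (pderiv (s,k) y) * (⇑d)^[k] (pderiv (sw s,l) z)))))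
    = ∑ j ∈ Finset.range (n+1), ∑ p ∈ Finset.range (m+1),
        (pTerm d x y z (t,s,m,n,k,l,j,p) + qTerm d x y z (t,s,m,n,k,l,j,p)) := by
  rw [Derivation.map_smul, pderiv_mul, pderiv_iter d hd (sw t) l n,
    pderiv_iter d hd (sw t) k n]
  simp only [Finset.sum_mul, Finset.mul_sum, smul_mul_assoc, mul_smul_comm,
    iter_smul, iter_add, iter_sum, smul_add, Finset.smul_sum]
  simp only [iter_mul d, Finset.mul_sum, Finset.smul_sum, mul_smul_comm, smul_smul,
    ← Function.iterate_add_apply, Finset.sum_add_distrib]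
  rw [mul_add, smul_add]
  congr 1
  · simp only [Finset.mul_sum, Finset.smul_sum, mul_smul_comm, smul_smul]
    apply Finset.sum_congr rfl
    intro j _
    apply Finset.sum_congr rfl
    intro p _
    simp only [pTerm]
    by_cases hjl : j ≤ l
    · have e : p + (l - j) = (p + l) - j := by omega
      rw [e]
      simp only [smul_eq_C_mul, map_mul]
      ring
    · have e : l.choose j = 0 := Nat.choose_eq_zero_of_lt (by omega)
      simp [e]
  · simp only [Finset.mul_sum, Finset.smul_sum, mul_smul_comm, smul_smul]
    apply Finset.sum_congr rfl
    intro j _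
    apply Finset.sum_congr rfl
    intro p _
    simp only [qTerm]
    simp only [smul_eq_C_mul, map_mul]
    ring


lemma sum_ite_range {M : Type*} [AddCommMonoid M] {a b : ℕ} (hab : a < b) (f : ℕ → M) :
    ∑ i ∈ Finset.range b, (if i ≤ a then f i else 0) = ∑ i ∈ Finset.range (a+1), f i := by
  rw [← Finset.sum_filter]
  apply Finset.sum_congr _ (fun _ _ => rfl)
  ext i
  simp only [Finset.mem_filter, Finset.mem_range, Nat.lt_succ_iff]
  omega

lemma qTerm_vanish {S : Finset ι} {N : ℕ} {z : DiffPoly ι} (hz : Good S N z)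
    (x y : DiffPoly ι) (t s : ι ⊕ ι) (m n k l j p : ℕ)
    (hbad : ¬(j ≤ k ∧ n < N + j)) :
    qTerm d x y z (t,s,m,n,k,l,j,p) = 0 := by
  simp only [qTerm]
  by_cases hjk : j ≤ k
  · have hn : N ≤ n - j := by omega
    rw [pdc, hz (sw t) (n - j) (Or.inr hn), map_zero, iter_zero, mul_zero, mul_zero, smul_zero]
  · simp [Nat.choose_eq_zero_of_lt (by omega : k < j)]

lemma pTerm_vanish {S : Finset ι} {N : ℕ} {y : DiffPoly ι} (hy : Good S N y)
    (x z : DiffPoly ι) (t s : ι ⊕ ι) (m n k l j p : ℕ)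
    (hbad : ¬(j ≤ l ∧ n < N + j)) :
    pTerm d x y z (t,s,m,n,k,l,j,p) = 0 := by
  simp only [pTerm]
  by_cases hjl : j ≤ l
  · have hn : N ≤ n - j := by omega
    rw [pdc, hy (sw t) (n - j) (Or.inr hn), map_zero, iter_zero, zero_mul, mul_zero, smul_zero]
  · simp [Nat.choose_eq_zero_of_lt (by omega : l < j)]

/-- conversion of a nested sum into the filtered sum, `Q`-version -/
lemma qnest {S : Finset ι} {N : ℕ} {z : DiffPoly ι} (hz : Good S N z)
    (x y : DiffPoly ι) :
    ∑ t ∈ S.disjSum S, ∑ m ∈ Finset.range N, ∑ n ∈ Finset.range (2*N),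
      ∑ s ∈ S.disjSum S, ∑ k ∈ Finset.range N, ∑ l ∈ Finset.range N,
        ∑ j ∈ Finset.range (n+1), ∑ p ∈ Finset.range (m+1),
          qTerm d x y z (t,s,m,n,k,l,j,p)
      = ∑ w ∈ qSet S N, qTerm d x y z w := by
  classical
  have h1 : ∑ w ∈ qSet S N, qTerm d x y z w
      = ∑ w ∈ (rect S N).filter
          (fun w => match w with | (_,_,m,n,_,_,j,p) => j ≤ n ∧ p ≤ m),
          qTerm d x y z w := by
    apply Finset.sum_subset
    · rintro ⟨t,s,m,n,k,l,j,p⟩ hw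
      rw [mem_qSet] at hw
      simp only [Finset.mem_filter]
      refine ⟨?_, by omega, by omega⟩
      simp only [rect, Finset.mem_product, Finset.mem_range]
      exact ⟨hw.1.1, hw.1.2.1, by omega, by omega, by omega, by omega, by omega, by omega⟩
    · rintro ⟨t,s,m,n,k,l,j,p⟩ hw hnotin
      simp only [Finset.mem_filter] at hw
      apply qTerm_vanish d hz x y
      intro hcon
      apply hnotin
      rw [mem_qSet]
      simp only [rect, Finset.mem_product, Finset.mem_range] at hw
      exact ⟨⟨hw.1.1, hw.1.2.1, hw.1.2.2.1, hw.1.2.2.2.1, hw.1.2.2.2.2.1,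
        hw.1.2.2.2.2.2.1, hw.1.2.2.2.2.2.2.1, hw.1.2.2.2.2.2.2.2⟩,
        hcon.1, hw.2.1, hcon.2, hw.2.2⟩
  rw [h1, Finset.sum_filter]
  simp only [rect, Finset.sum_product]
  -- now both sides are nested; fix the order on the left
  apply Finset.sum_congr rfl
  intro t _
  -- LHS: ∑_m ∑_n ∑_s ...  RHS: ∑_s ∑_m ∑_n ...
  rw [show (∑ s ∈ S.disjSum S, ∑ m ∈ Finset.range N, ∑ n ∈ Finset.range (2*N),
      ∑ k ∈ Finset.range N, ∑ l ∈ Finset.range N, ∑ j ∈ Finset.range (2*N),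
      ∑ p ∈ Finset.range N,
        (if j ≤ n ∧ p ≤ m then qTerm d x y z (t,s,m,n,k,l,j,p) else 0))
    = ∑ m ∈ Finset.range N, ∑ s ∈ S.disjSum S, ∑ n ∈ Finset.range (2*N),
      ∑ k ∈ Finset.range N, ∑ l ∈ Finset.range N, ∑ j ∈ Finset.range (2*N),
      ∑ p ∈ Finset.range N,
        (if j ≤ n ∧ p ≤ m then qTerm d x y z (t,s,m,n,k,l,j,p) else 0)
    from Finset.sum_comm]
  apply Finset.sum_congr rfl
  intro m hm
  rw [show (∑ s ∈ S.disjSum S, ∑ n ∈ Finset.range (2*N),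
      ∑ k ∈ Finset.range N, ∑ l ∈ Finset.range N, ∑ j ∈ Finset.range (2*N),
      ∑ p ∈ Finset.range N,
        (if j ≤ n ∧ p ≤ m then qTerm d x y z (t,s,m,n,k,l,j,p) else 0))
    = ∑ n ∈ Finset.range (2*N), ∑ s ∈ S.disjSum S,
      ∑ k ∈ Finset.range N, ∑ l ∈ Finset.range N, ∑ j ∈ Finset.range (2*N),
      ∑ p ∈ Finset.range N,
        (if j ≤ n ∧ p ≤ m then qTerm d x y z (t,s,m,n,k,l,j,p) else 0)
    from Finset.sum_comm]
  apply Finset.sum_congr rfl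
  intro n hn
  apply Finset.sum_congr rfl
  intro s _
  apply Finset.sum_congr rfl
  intro k _
  apply Finset.sum_congr rfl
  intro l _
  rw [Finset.mem_range] at hm hn
  have hj : ∀ j, (∑ p ∈ Finset.range N,
      (if j ≤ n ∧ p ≤ m then qTerm d x y z (t,s,m,n,k,l,j,p) else 0))
      = (if j ≤ n then ∑ p ∈ Finset.range N,
          (if p ≤ m then qTerm d x y z (t,s,m,n,k,l,j,p) else 0) else 0) := by
    intro j
    by_cases hjn : j ≤ n
    · simp only [hjn, true_and, if_true]
    · simp only [hjn, false_and, if_false, Finset.sum_const_zero]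
  rw [Finset.sum_congr rfl (fun j _ => hj j), sum_ite_range hn]
  apply Finset.sum_congr rfl
  intro j _
  rw [sum_ite_range hm]

/-- conversion of a nested sum into the filtered sum, `P`-version -/
lemma pnest {S : Finset ι} {N : ℕ} {y : DiffPoly ι} (hy : Good S N y)
    (x z : DiffPoly ι) :
    ∑ t ∈ S.disjSum S, ∑ m ∈ Finset.range N, ∑ n ∈ Finset.range (2*N),
      ∑ s ∈ S.disjSum S, ∑ k ∈ Finset.range N, ∑ l ∈ Finset.range N,
        ∑ j ∈ Finset.range (n+1), ∑ p ∈ Finset.range (m+1),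
          pTerm d x y z (t,s,m,n,k,l,j,p)
      = ∑ w ∈ pSet S N, pTerm d x y z w := by
  classical
  have h1 : ∑ w ∈ pSet S N, pTerm d x y z w
      = ∑ w ∈ (rect S N).filter
          (fun w => match w with | (_,_,m,n,_,_,j,p) => j ≤ n ∧ p ≤ m),
          pTerm d x y z w := by
    apply Finset.sum_subset
    · rintro ⟨t,s,m,n,k,l,j,p⟩ hw
      rw [mem_pSet] at hw
      simp only [Finset.mem_filter]
      refine ⟨?_, by omega, by omega⟩
      simp only [rect, Finset.mem_product, Finset.mem_range]
      exact ⟨hw.1.1, hw.1.2.1, by omega, by omega, by omega, by omega, by omega, by omega⟩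
    · rintro ⟨t,s,m,n,k,l,j,p⟩ hw hnotin
      simp only [Finset.mem_filter] at hw
      apply pTerm_vanish d hy x z
      intro hcon
      apply hnotin
      rw [mem_pSet]
      simp only [rect, Finset.mem_product, Finset.mem_range] at hw
      exact ⟨⟨hw.1.1, hw.1.2.1, hw.1.2.2.1, hw.1.2.2.2.1, hw.1.2.2.2.2.1,
        hw.1.2.2.2.2.2.1, hw.1.2.2.2.2.2.2.1, hw.1.2.2.2.2.2.2.2⟩,
        hcon.1, hw.2.1, hcon.2, hw.2.2⟩
  rw [h1, Finset.sum_filter]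
  simp only [rect, Finset.sum_product]
  -- now both sides are nested; fix the order on the left
  apply Finset.sum_congr rfl
  intro t _
  -- LHS: ∑_m ∑_n ∑_s ...  RHS: ∑_s ∑_m ∑_n ...
  rw [show (∑ s ∈ S.disjSum S, ∑ m ∈ Finset.range N, ∑ n ∈ Finset.range (2*N),
      ∑ k ∈ Finset.range N, ∑ l ∈ Finset.range N, ∑ j ∈ Finset.range (2*N),
      ∑ p ∈ Finset.range N,
        (if j ≤ n ∧ p ≤ m then pTerm d x y z (t,s,m,n,k,l,j,p) else 0))
    = ∑ m ∈ Finset.range N, ∑ s ∈ S.disjSum S, ∑ n ∈ Finset.range (2*N),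
      ∑ k ∈ Finset.range N, ∑ l ∈ Finset.range N, ∑ j ∈ Finset.range (2*N),
      ∑ p ∈ Finset.range N,
        (if j ≤ n ∧ p ≤ m then pTerm d x y z (t,s,m,n,k,l,j,p) else 0)
    from Finset.sum_comm]
  apply Finset.sum_congr rfl
  intro m hm
  rw [show (∑ s ∈ S.disjSum S, ∑ n ∈ Finset.range (2*N),
      ∑ k ∈ Finset.range N, ∑ l ∈ Finset.range N, ∑ j ∈ Finset.range (2*N),
      ∑ p ∈ Finset.range N,
        (if j ≤ n ∧ p ≤ m then pTerm d x y z (t,s,m,n,k,l,j,p) else 0))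
    = ∑ n ∈ Finset.range (2*N), ∑ s ∈ S.disjSum S,
      ∑ k ∈ Finset.range N, ∑ l ∈ Finset.range N, ∑ j ∈ Finset.range (2*N),
      ∑ p ∈ Finset.range N,
        (if j ≤ n ∧ p ≤ m then pTerm d x y z (t,s,m,n,k,l,j,p) else 0)
    from Finset.sum_comm]
  apply Finset.sum_congr rfl
  intro n hn
  apply Finset.sum_congr rfl
  intro s _
  apply Finset.sum_congr rfl
  intro k _
  apply Finset.sum_congr rfl
  intro l _
  rw [Finset.mem_range] at hm hn
  have hj : ∀ j, (∑ p ∈ Finset.range N,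
      (if j ≤ n ∧ p ≤ m then pTerm d x y z (t,s,m,n,k,l,j,p) else 0))
      = (if j ≤ n then ∑ p ∈ Finset.range N,
          (if p ≤ m then pTerm d x y z (t,s,m,n,k,l,j,p) else 0) else 0) := by
    intro j
    by_cases hjn : j ≤ n
    · simp only [hjn, true_and, if_true]
    · simp only [hjn, false_and, if_false, Finset.sum_const_zero]
  rw [Finset.sum_congr rfl (fun j _ => hj j), sum_ite_range hn]
  apply Finset.sum_congr rfl
  intro j _
  rw [sum_ite_range hm]

include hd in
lemma master {S : Finset ι} {N : ℕ} {x y z : DiffPoly ι}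
    (hx : Good S N x) (hy : Good S N y) (hz : Good S N z) :
    solovievBracket d x (solovievBracket d y z)
      = (∑ w ∈ pSet S N, pTerm d x y z w) + (∑ w ∈ qSet S N, qTerm d x y z w) := by
  have hW : Good S (2*N) (solovievBracket d y z) := good_bracket d hd hy hz
  rw [bracket_eq d hx hW]
  have step : ∀ t ∈ S.disjSum S, ∀ m ∈ Finset.range N, ∀ n ∈ Finset.range (2*N),
      sg t • ((⇑d)^[n] (pderiv (t, m) x)
          * (⇑d)^[m] (pderiv (sw t, n) (solovievBracket d y z)))
        = ∑ s ∈ S.disjSum S, ∑ k ∈ Finset.range N, ∑ l ∈ Finset.range N,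
            ∑ j ∈ Finset.range (n+1), ∑ p ∈ Finset.range (m+1),
              (pTerm d x y z (t,s,m,n,k,l,j,p) + qTerm d x y z (t,s,m,n,k,l,j,p)) := by
    intro t _ m _ n _
    rw [bracket_eq d hy hz]
    simp only [map_sum, iter_sum, Finset.mul_sum, Finset.smul_sum]
    apply Finset.sum_congr rfl; intro s _
    apply Finset.sum_congr rfl; intro k _
    apply Finset.sum_congr rfl; intro l _
    exact expand_term d hd x y z t s m n k l
  rw [Finset.sum_congr rfl (fun t ht => Finset.sum_congr rfl (fun m hm =>
    Finset.sum_congr rfl (fun n hn => step t ht m hm n hn)))]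
  simp only [Finset.sum_add_distrib]
  rw [pnest d hy x z, qnest d hz x y]

end WithD




end Stmt6Aux

open Stmt6Aux in
/-- the Jacobi identity for the Soloviev bracket:
`[f, [g, h]] = [[f, g], h] + [g, [f, h]]`. -/
theorem stmt6 {ι : Type*} (d : Derivation ℚ (DiffPoly ι) (DiffPoly ι))
    (hd : ∀ (s : ι ⊕ ι) (k : ℕ), d (X (s, k)) = X (s, k + 1))
    (f g h : DiffPoly ι) :
    solovievBracket d f (solovievBracket d g h)
      = solovievBracket d (solovievBracket d f g) h
        + solovievBracket d g (solovievBracket d f h) := by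
  classical
  set V : Finset ((ι ⊕ ι) × ℕ) := f.vars ∪ g.vars ∪ h.vars with hV
  set S : Finset ι := V.image (fun v => core v.1) with hS
  set N : ℕ := (V.sup (fun v => v.2)) + 1 with hN
  have hGood : ∀ (p : DiffPoly ι), p.vars ⊆ V → Good S N p := by
    intro p hp c k hck
    apply pderiv_eq_zero_of_notMem_vars
    intro hmem
    have hv : ((c,k) : (ι ⊕ ι) × ℕ) ∈ V := hp hmem
    rcases hck with hcS | hkN
    · exact hcS (by
        rw [hS]
        exact Finset.mem_image_of_mem _ hv)
    · have hle := Finset.le_sup (f := fun v : ((ι ⊕ ι) × ℕ) => v.2) hv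
      simp only at hle
      omega
  have hf : Good S N f := hGood f (fun v hv => Finset.mem_union_left _ (Finset.mem_union_left _ hv))
  have hg : Good S N g := hGood g (fun v hv => Finset.mem_union_left _ (Finset.mem_union_right _ hv))
  have hh : Good S N h := hGood h (fun v hv => Finset.mem_union_right _ hv)
  have hfg2 : Good S (2*N) (solovievBracket d f g) := good_bracket d hd hf hg
  have hh2 : Good S (2*N) h := fun c k hck => hh c k (by
    rcases hck with h1 | h1
    · exact Or.inl h1
    · exact Or.inr (by omega))
  rw [bracket_antisymm d hfg2 hh2]
  rw [master d hd hf hg hh, master d hd hh hf hg, master d hd hg hf hh]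
  rw [p_eq_neg_q d S N f g h, p_eq_neg_q d S N h f g, p_eq_neg_q d S N g f h]
  rw [q_symm d S N f h g, q_symm d S N h g f, q_symm d S N f g h]
  abel

end
end

section
/- Let R be a commutative ring and d : R → R a derivation. Let a, b : ℕ → R be finitely supported families. Then ∑_{k,ℓ ≥ 0} d^ℓ(a(k)) · d^k(b(ℓ)) − ( ∑_{k ≥ 0} (−1)^k d^k(a(k)) ) · ( ∑_{ℓ ≥ 0} (−1)^ℓ d^ℓ(b(ℓ)) ) lies in the range of d. -/
private lemma iter_zero {R : Type*} [CommRing R] (d : Derivation ℤ R R) (n : ℕ) :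
    (⇑d)^[n] (0 : R) = 0 :=
  Function.iterate_fixed (map_zero d) n

/-- integration by parts: `u * d^k v - (-1)^k (d^k u * v)` is in the range of `d`. -/
private lemma parts {R : Type*} [CommRing R] (d : Derivation ℤ R R) (k : ℕ) (u v : R) :
    u * (⇑d)^[k] v - ((-1 : ℤ) ^ k) • ((⇑d)^[k] u * v) ∈ LinearMap.range d.toLinearMap := by
  induction k generalizing u with
  | zero => simp
  | succ k ih =>
      have h1 : u * (⇑d)^[k+1] v + d u * (⇑d)^[k] v ∈ LinearMap.range d.toLinearMap := by
        refine ⟨u * (⇑d)^[k] v, ?_⟩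
        show d (u * (⇑d)^[k] v) = _
        rw [Derivation.leibniz, Function.iterate_succ_apply']
        simp [smul_eq_mul]; ring
      have h2 := ih (d u)
      rw [← Function.iterate_succ_apply] at h2
      have key : u * (⇑d)^[k+1] v - ((-1 : ℤ) ^ (k+1)) • ((⇑d)^[k+1] u * v)
          = (u * (⇑d)^[k+1] v + d u * (⇑d)^[k] v)
            - (d u * (⇑d)^[k] v - ((-1 : ℤ) ^ k) • ((⇑d)^[k+1] u * v)) := by
        simp only [zsmul_eq_mul, pow_succ]
        push_cast
        ring
      rw [key]
      exact Submodule.sub_mem _ h1 h2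

/-- two-sided version -/
private lemma parts2 {R : Type*} [CommRing R] (d : Derivation ℤ R R) (k ℓ : ℕ) (u v : R) :
    (⇑d)^[ℓ] u * (⇑d)^[k] v - ((-1 : ℤ) ^ (k + ℓ)) • ((⇑d)^[k] u * (⇑d)^[ℓ] v)
      ∈ LinearMap.range d.toLinearMap := by
  have hA := parts d k ((⇑d)^[ℓ] u) v
  rw [← Function.iterate_add_apply] at hA
  have hB := parts d ℓ ((⇑d)^[k] u) v
  rw [← Function.iterate_add_apply, add_comm ℓ k] at hB
  have hB' := Submodule.smul_mem _ ((-1 : ℤ) ^ (k + ℓ)) hB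
  have hpow : ((-1 : ℤ)) ^ (k + ℓ) * (-1) ^ ℓ = (-1) ^ k := by
    rw [← pow_add, add_assoc, ← two_mul, pow_add, pow_mul]
    simp
  have key : (⇑d)^[ℓ] u * (⇑d)^[k] v - ((-1 : ℤ) ^ (k + ℓ)) • ((⇑d)^[k] u * (⇑d)^[ℓ] v)
      = ((⇑d)^[ℓ] u * (⇑d)^[k] v - ((-1 : ℤ) ^ k) • ((⇑d)^[k + ℓ] u * v))
        - ((-1 : ℤ) ^ (k + ℓ)) •
            ((⇑d)^[k] u * (⇑d)^[ℓ] v - ((-1 : ℤ) ^ ℓ) • ((⇑d)^[k + ℓ] u * v)) := by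
    rw [smul_sub, smul_smul, hpow]
    ring
  rw [key]
  exact Submodule.sub_mem _ hA hB'

/-- For a commutative ring `R`, a derivation `d : R → R`, and finitely
supported families `a b : ℕ → R`, the element
`∑_{k,ℓ} d^ℓ(a(k))·d^k(b(ℓ)) − (∑_k (−1)^k d^k(a(k)))·(∑_ℓ (−1)^ℓ d^ℓ(b(ℓ)))`
is a total derivative, i.e. lies in the range of `d`. -/
theorem stmt7 {R : Type*} [CommRing R] (d : Derivation ℤ R R)
    (a b : ℕ → R)
    (ha : (Function.support a).Finite) (hb : (Function.support b).Finite) :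
    ((∑ᶠ k : ℕ, ∑ᶠ ℓ : ℕ, (⇑d)^[ℓ] (a k) * (⇑d)^[k] (b ℓ))
      - (∑ᶠ k : ℕ, ((-1 : ℤ) ^ k) • (⇑d)^[k] (a k))
          * (∑ᶠ ℓ : ℕ, ((-1 : ℤ) ^ ℓ) • (⇑d)^[ℓ] (b ℓ)))
      ∈ Set.range ⇑d := by
  classical
  set s : Finset ℕ := ha.toFinset ∪ hb.toFinset with hs
  have has : ∀ k, k ∉ s → a k = 0 := by
    intro k hk
    by_contra h
    exact hk (Finset.mem_union_left _ (ha.mem_toFinset.2 h))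
  have hbs : ∀ ℓ, ℓ ∉ s → b ℓ = 0 := by
    intro ℓ hℓ
    by_contra h
    exact hℓ (Finset.mem_union_right _ (hb.mem_toFinset.2 h))
  have e1 : (∑ᶠ k : ℕ, ∑ᶠ ℓ : ℕ, (⇑d)^[ℓ] (a k) * (⇑d)^[k] (b ℓ))
      = ∑ k ∈ s, ∑ ℓ ∈ s, (⇑d)^[ℓ] (a k) * (⇑d)^[k] (b ℓ) := by
    have inner : ∀ k, (∑ᶠ ℓ : ℕ, (⇑d)^[ℓ] (a k) * (⇑d)^[k] (b ℓ))
        = ∑ ℓ ∈ s, (⇑d)^[ℓ] (a k) * (⇑d)^[k] (b ℓ) := by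
      intro k
      refine finsum_eq_finset_sum_of_support_subset _ ?_
      intro ℓ hℓ
      simp only [Function.mem_support] at hℓ
      by_contra h
      simp only [Finset.coe_sort_coe, Finset.mem_coe] at h
      exact hℓ (by rw [hbs ℓ h, iter_zero, mul_zero])
    rw [finsum_congr inner]
    refine finsum_eq_finset_sum_of_support_subset _ ?_
    intro k hk
    simp only [Function.mem_support] at hk
    by_contra h
    simp only [Finset.coe_sort_coe, Finset.mem_coe] at h
    refine hk (Finset.sum_eq_zero fun ℓ _ => ?_)
    rw [has k h, iter_zero, zero_mul]
  have e2 : (∑ᶠ k : ℕ, ((-1 : ℤ) ^ k) • (⇑d)^[k] (a k))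
      = ∑ k ∈ s, ((-1 : ℤ) ^ k) • (⇑d)^[k] (a k) := by
    refine finsum_eq_finset_sum_of_support_subset _ ?_
    intro k hk
    simp only [Function.mem_support] at hk
    by_contra h
    simp only [Finset.coe_sort_coe, Finset.mem_coe] at h
    exact hk (by rw [has k h, iter_zero, smul_zero])
  have e3 : (∑ᶠ ℓ : ℕ, ((-1 : ℤ) ^ ℓ) • (⇑d)^[ℓ] (b ℓ))
      = ∑ ℓ ∈ s, ((-1 : ℤ) ^ ℓ) • (⇑d)^[ℓ] (b ℓ) := by
    refine finsum_eq_finset_sum_of_support_subset _ ?_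
    intro ℓ hℓ
    simp only [Function.mem_support] at hℓ
    by_contra h
    simp only [Finset.coe_sort_coe, Finset.mem_coe] at h
    exact hℓ (by rw [hbs ℓ h, iter_zero, smul_zero])
  rw [e1, e2, e3, Finset.sum_mul_sum]
  rw [← Finset.sum_sub_distrib]
  simp only [← Finset.sum_sub_distrib]
  suffices h : (∑ k ∈ s, ∑ ℓ ∈ s,
      ((⇑d)^[ℓ] (a k) * (⇑d)^[k] (b ℓ)
        - ((-1 : ℤ) ^ k) • (⇑d)^[k] (a k) * (((-1 : ℤ) ^ ℓ) • (⇑d)^[ℓ] (b ℓ))))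
      ∈ LinearMap.range d.toLinearMap by
    obtain ⟨x, hx⟩ := h
    exact ⟨x, hx⟩
  refine Submodule.sum_mem _ fun k _ => Submodule.sum_mem _ fun ℓ _ => ?_
  have := parts2 d k ℓ (a k) (b ℓ)
  have key : (⇑d)^[ℓ] (a k) * (⇑d)^[k] (b ℓ)
        - ((-1 : ℤ) ^ k) • (⇑d)^[k] (a k) * (((-1 : ℤ) ^ ℓ) • (⇑d)^[ℓ] (b ℓ))
      = (⇑d)^[ℓ] (a k) * (⇑d)^[k] (b ℓ)
        - ((-1 : ℤ) ^ (k + ℓ)) • ((⇑d)^[k] (a k) * (⇑d)^[ℓ] (b ℓ)) := by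
    simp only [zsmul_eq_mul, pow_add]
    push_cast
    ring
  rw [key]
  exact this
end

section
/- Let ι be a type and let R := MvPolynomial ((ι ⊕ ι) × ℕ) ℚ, with field variables u_{i,k} := X(inl i, k) and antifield variables v_{i,k} := X(inr i, k). Let d : R → R be the unique derivation with d(X(s,k)) = X(s,k+1). Define the (even, ungraded analogue of the) Soloviev bracket [f,g] := ∑_{i,k,ℓ} ( d^ℓ(pderiv(inl i,k) f)·d^k(pderiv(inr i,ℓ) g) − d^ℓ(pderiv(inr i,k) f)·d^k(pderiv(inl i,ℓ) g) ), and the variational derivatives E^u_{i,0}(f) := ∑_{j≥0} (−1)^j d^j(pderiv(inl i,j) f) and E^v_{i,0}(f) := ∑_{j≥0} (−1)^j d^j(pderiv(inr i,j) f). Then for all f, g ∈ R, the element [f,g] − ∑_i ( E^u_{i,0}(f)·E^v_{i,0}(g) − E^v_{i,0}(f)·E^u_{i,0}(g) ) lies in the range of d. -/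
open MvPolynomial

noncomputable section

/-- The variational derivative in the field variables:
`E^u_{i,0}(f) = ∑_{j≥0} (−1)^j d^j(∂^u_{i,j} f)`. -/
def varDerivU {ι : Type*} (d : Derivation ℚ (DiffPoly ι) (DiffPoly ι)) (i : ι)
    (f : DiffPoly ι) : DiffPoly ι :=
  ∑ᶠ j : ℕ, ((-1 : ℚ) ^ j) • (⇑d)^[j] (pderiv (Sum.inl i, j) f)

/-- The variational derivative in the antifield variables:
`E^v_{i,0}(f) = ∑_{j≥0} (−1)^j d^j(∂^v_{i,j} f)`. -/
def varDerivV {ι : Type*} (d : Derivation ℚ (DiffPoly ι) (DiffPoly ι)) (i : ι)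
    (f : DiffPoly ι) : DiffPoly ι :=
  ∑ᶠ j : ℕ, ((-1 : ℚ) ^ j) • (⇑d)^[j] (pderiv (Sum.inr i, j) f)

/-! ### Auxiliary lemmas -/

lemma dIter_zero_s8 {ι : Type*} (d : Derivation ℚ (DiffPoly ι) (DiffPoly ι)) (j : ℕ) :
    (⇑d)^[j] (0 : DiffPoly ι) = 0 :=
  Function.iterate_fixed (map_zero d) j

/-- Integration by parts: moving all derivatives of `b` over to `a` costs a sign each. -/
lemma key_ibp {ι : Type*} (d : Derivation ℚ (DiffPoly ι) (DiffPoly ι)) (m n : ℕ)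
    (a b : DiffPoly ι) :
    (⇑d)^[m] a * (⇑d)^[n] b - ((-1 : ℚ) ^ n) • ((⇑d)^[m + n] a * b)
      ∈ LinearMap.range (d.toLinearMap) := by
  induction n generalizing m with
  | zero => simp
  | succ n ih =>
    have hsub : (⇑d)^[m] a * (⇑d)^[n + 1] b =
        d ((⇑d)^[m] a * (⇑d)^[n] b) - (⇑d)^[m + 1] a * (⇑d)^[n] b := by
      rw [Function.iterate_succ_apply' d n b, Function.iterate_succ_apply' d m a,
        Derivation.leibniz]
      simp only [smul_eq_mul]
      ring
    have h2 := ih (m + 1)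
    rw [show m + 1 + n = m + (n + 1) by omega] at h2
    have heq : (⇑d)^[m] a * (⇑d)^[n + 1] b
          - ((-1 : ℚ) ^ (n + 1)) • ((⇑d)^[m + (n + 1)] a * b)
        = d ((⇑d)^[m] a * (⇑d)^[n] b)
          - ((⇑d)^[m + 1] a * (⇑d)^[n] b
            - ((-1 : ℚ) ^ n) • ((⇑d)^[m + (n + 1)] a * b)) := by
      rw [hsub]
      simp only [smul_eq_C_mul, map_pow, map_neg, map_one]
      ring
    rw [heq]
    exact sub_mem ⟨_, rfl⟩ h2

lemma key_swap {ι : Type*} (d : Derivation ℚ (DiffPoly ι) (DiffPoly ι)) (k l : ℕ)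
    (a b : DiffPoly ι) :
    (⇑d)^[l] a * (⇑d)^[k] b - ((-1 : ℚ) ^ (k + l)) • ((⇑d)^[k] a * (⇑d)^[l] b)
      ∈ LinearMap.range (d.toLinearMap) := by
  have h1 := key_ibp d l k a b
  have h2 := key_ibp d k l a b
  rw [show l + k = k + l by omega] at h1
  have hpow : ((-1 : DiffPoly ι)) ^ (k + l) * (-1) ^ l = (-1) ^ k := by
    rw [← pow_add, show k + l + l = k + 2 * l by ring, pow_add, pow_mul]
    norm_num
  have heq : (⇑d)^[l] a * (⇑d)^[k] b - ((-1 : ℚ) ^ (k + l)) • ((⇑d)^[k] a * (⇑d)^[l] b)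
      = ((⇑d)^[l] a * (⇑d)^[k] b - ((-1 : ℚ) ^ k) • ((⇑d)^[k + l] a * b))
        - ((-1 : ℚ) ^ (k + l))
          • ((⇑d)^[k] a * (⇑d)^[l] b - ((-1 : ℚ) ^ l) • ((⇑d)^[k + l] a * b)) := by
    simp only [smul_eq_C_mul, map_pow, map_neg, map_one, mul_sub, smul_sub]
    linear_combination (-((⇑d)^[k + l] a * b)) * hpow
  rw [heq]
  exact sub_mem h1 (Submodule.smul_mem _ _ h2)

lemma key_term {ι : Type*} (d : Derivation ℚ (DiffPoly ι) (DiffPoly ι)) (k l : ℕ)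
    (a b a' b' : DiffPoly ι) :
    ((⇑d)^[l] a * (⇑d)^[k] b - (⇑d)^[l] a' * (⇑d)^[k] b')
      - ((((-1 : ℚ) ^ k) • (⇑d)^[k] a) * (((-1 : ℚ) ^ l) • (⇑d)^[l] b)
        - (((-1 : ℚ) ^ k) • (⇑d)^[k] a') * (((-1 : ℚ) ^ l) • (⇑d)^[l] b'))
      ∈ LinearMap.range (d.toLinearMap) := by
  have h1 := key_swap d k l a b
  have h2 := key_swap d k l a' b'
  have heq : ((⇑d)^[l] a * (⇑d)^[k] b - (⇑d)^[l] a' * (⇑d)^[k] b')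
      - ((((-1 : ℚ) ^ k) • (⇑d)^[k] a) * (((-1 : ℚ) ^ l) • (⇑d)^[l] b)
        - (((-1 : ℚ) ^ k) • (⇑d)^[k] a') * (((-1 : ℚ) ^ l) • (⇑d)^[l] b'))
      = ((⇑d)^[l] a * (⇑d)^[k] b - ((-1 : ℚ) ^ (k + l)) • ((⇑d)^[k] a * (⇑d)^[l] b))
        - ((⇑d)^[l] a' * (⇑d)^[k] b'
          - ((-1 : ℚ) ^ (k + l)) • ((⇑d)^[k] a' * (⇑d)^[l] b')) := by
    simp only [smul_eq_C_mul, pow_add, map_mul, map_pow, map_neg, map_one]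
    ring
  rw [heq]
  exact sub_mem h1 h2

lemma finsum_nat_eq_range_sum {M : Type*} [AddCommMonoid M] (F : ℕ → M) (N : ℕ)
    (h : ∀ j, N ≤ j → F j = 0) : ∑ᶠ j, F j = ∑ j ∈ Finset.range N, F j := by
  apply finsum_eq_sum_of_support_subset
  intro j hj
  simp only [Function.mem_support] at hj
  simp only [Finset.coe_range, Set.mem_Iio]
  by_contra hc
  exact hj (h j (by omega))

lemma finsum_eq_finset_sum {M : Type*} [AddCommMonoid M] {κ : Type*} (F : κ → M)
    (S : Finset κ) (h : ∀ i, i ∉ S → F i = 0) : ∑ᶠ i, F i = ∑ i ∈ S, F i := by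
  apply finsum_eq_sum_of_support_subset
  intro i hi
  simp only [Function.mem_support] at hi
  by_contra hc
  exact hi (h i hc)

/-- modulo total derivatives, the Soloviev bracket equals the
variational-derivative expression:
`[f,g] − ∑_i ( E^u_{i,0}(f)·E^v_{i,0}(g) − E^v_{i,0}(f)·E^u_{i,0}(g) )` lies in the
range of `d`. -/
theorem stmt8 {ι : Type*} (d : Derivation ℚ (DiffPoly ι) (DiffPoly ι))
    (hd : ∀ (s : ι ⊕ ι) (k : ℕ), d (X (s, k)) = X (s, k + 1))
    (f g : DiffPoly ι) :
    (solovievBracket d f g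
      - ∑ᶠ i : ι, (varDerivU d i f * varDerivV d i g - varDerivV d i f * varDerivU d i g))
      ∈ Set.range ⇑d := by
  classical
  set V : Finset ((ι ⊕ ι) × ℕ) := f.vars ∪ g.vars with hVdef
  set N : ℕ := V.sup Prod.snd + 1 with hNdef
  set S : Finset ι := V.image (fun p => Sum.elim id id p.1) with hSdef
  -- vanishing of high derivatives
  have hhigh : ∀ (s : ι ⊕ ι) (k : ℕ), N ≤ k → ∀ (p : DiffPoly ι), p = f ∨ p = g →
      pderiv (s, k) p = 0 := by
    intro s k hk p hp
    apply pderiv_eq_zero_of_notMem_vars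
    intro hmem
    have hmemV : (s, k) ∈ V := by
      rcases hp with rfl | rfl
      · exact Finset.mem_union_left _ hmem
      · exact Finset.mem_union_right _ hmem
    have := Finset.le_sup (f := Prod.snd) hmemV
    simp only at this
    omega
  -- vanishing outside S
  have hnot : ∀ (i : ι), i ∉ S → ∀ (s : ι ⊕ ι), s = Sum.inl i ∨ s = Sum.inr i →
      ∀ (k : ℕ) (p : DiffPoly ι), p = f ∨ p = g → pderiv (s, k) p = 0 := by
    intro i hi s hs k p hp
    apply pderiv_eq_zero_of_notMem_vars
    intro hmem
    apply hi
    have hmemV : (s, k) ∈ V := by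
      rcases hp with rfl | rfl
      · exact Finset.mem_union_left _ hmem
      · exact Finset.mem_union_right _ hmem
    have hh := Finset.mem_image_of_mem (fun p => Sum.elim id id p.1) hmemV
    rcases hs with rfl | rfl <;> simpa [hSdef] using hh
  -- the bracket as a finite sum
  have hbr : solovievBracket d f g = ∑ i ∈ S, ∑ k ∈ Finset.range N, ∑ l ∈ Finset.range N,
      ((⇑d)^[l] (pderiv (Sum.inl i, k) f) * (⇑d)^[k] (pderiv (Sum.inr i, l) g)
        - (⇑d)^[l] (pderiv (Sum.inr i, k) f) * (⇑d)^[k] (pderiv (Sum.inl i, l) g)) := by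
    rw [solovievBracket]
    rw [finsum_eq_finset_sum _ S ?_]
    · refine Finset.sum_congr rfl fun i _ => ?_
      rw [finsum_nat_eq_range_sum _ N ?_]
      · refine Finset.sum_congr rfl fun k _ => ?_
        apply finsum_nat_eq_range_sum
        intro l hl
        rw [hhigh _ l hl g (Or.inr rfl), hhigh _ l hl g (Or.inr rfl)]
        simp [dIter_zero_s8]
      · intro k hk
        apply finsum_eq_zero_of_forall_eq_zero
        intro l
        rw [hhigh _ k hk f (Or.inl rfl), hhigh _ k hk f (Or.inl rfl)]
        simp [dIter_zero_s8]
    · intro i hi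
      apply finsum_eq_zero_of_forall_eq_zero
      intro k
      apply finsum_eq_zero_of_forall_eq_zero
      intro l
      rw [hnot i hi _ (Or.inl rfl) k f (Or.inl rfl),
        hnot i hi _ (Or.inr rfl) k f (Or.inl rfl)]
      simp [dIter_zero_s8]
  -- the variational derivatives as finite sums
  have hUf : ∀ i, varDerivU d i f = ∑ j ∈ Finset.range N,
      ((-1 : ℚ) ^ j) • (⇑d)^[j] (pderiv (Sum.inl i, j) f) := fun i =>
    finsum_nat_eq_range_sum _ N (fun j hj => by
      rw [hhigh _ j hj f (Or.inl rfl)]; simp [dIter_zero_s8])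
  have hVf : ∀ i, varDerivV d i f = ∑ j ∈ Finset.range N,
      ((-1 : ℚ) ^ j) • (⇑d)^[j] (pderiv (Sum.inr i, j) f) := fun i =>
    finsum_nat_eq_range_sum _ N (fun j hj => by
      rw [hhigh _ j hj f (Or.inl rfl)]; simp [dIter_zero_s8])
  have hUg : ∀ i, varDerivU d i g = ∑ j ∈ Finset.range N,
      ((-1 : ℚ) ^ j) • (⇑d)^[j] (pderiv (Sum.inl i, j) g) := fun i =>
    finsum_nat_eq_range_sum _ N (fun j hj => by
      rw [hhigh _ j hj g (Or.inr rfl)]; simp [dIter_zero_s8])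
  have hVg : ∀ i, varDerivV d i g = ∑ j ∈ Finset.range N,
      ((-1 : ℚ) ^ j) • (⇑d)^[j] (pderiv (Sum.inr i, j) g) := fun i =>
    finsum_nat_eq_range_sum _ N (fun j hj => by
      rw [hhigh _ j hj g (Or.inr rfl)]; simp [dIter_zero_s8])
  -- the E-sum as a finite sum
  have hE : (∑ᶠ i : ι, (varDerivU d i f * varDerivV d i g
        - varDerivV d i f * varDerivU d i g))
      = ∑ i ∈ S, (varDerivU d i f * varDerivV d i g
        - varDerivV d i f * varDerivU d i g) := by
    apply finsum_eq_finset_sum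
    intro i hi
    have h1 : varDerivU d i f = 0 := by
      rw [hUf i]
      apply Finset.sum_eq_zero
      intro j _
      rw [hnot i hi _ (Or.inl rfl) j f (Or.inl rfl)]
      simp [dIter_zero_s8]
    have h2 : varDerivV d i f = 0 := by
      rw [hVf i]
      apply Finset.sum_eq_zero
      intro j _
      rw [hnot i hi _ (Or.inr rfl) j f (Or.inl rfl)]
      simp [dIter_zero_s8]
    rw [h1, h2]
    ring
  -- reduce to a submodule membership
  suffices h : (solovievBracket d f g
      - ∑ᶠ i : ι, (varDerivU d i f * varDerivV d i g - varDerivV d i f * varDerivU d i g))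
      ∈ LinearMap.range (d.toLinearMap) by
    obtain ⟨y, hy⟩ := h
    exact ⟨y, hy⟩
  rw [hbr, hE, ← Finset.sum_sub_distrib]
  apply Submodule.sum_mem
  intro i _
  rw [hUf i, hVf i, hUg i, hVg i, Finset.sum_mul_sum, Finset.sum_mul_sum,
    ← Finset.sum_sub_distrib, ← Finset.sum_sub_distrib]
  apply Submodule.sum_mem
  intro k _
  rw [← Finset.sum_sub_distrib, ← Finset.sum_sub_distrib]
  apply Submodule.sum_mem
  intro l _
  exact key_term d k l _ _ _ _

end
end

section
/- Let ι be a type and let R := MvPolynomial ((ι ⊕ ι) × ℕ) ℚ, with variables X(s,k) for s ∈ ι ⊕ ι and k ∈ ℕ. Let d : R → R be the unique derivation with d(X(s,k)) = X(s,k+1). For s ∈ ι ⊕ ι and k ≥ 0 define the higher Euler operator E_{s,k}(f) := ∑_{j≥0} (−1)^j binom(k+j,k) d^j(pderiv(s, k+j) f). Then for every f ∈ R and every s: (i) E_{s,0}(d f) = 0, and (ii) for every k ≥ 0, E_{s,k+1}(d f) = E_{s,k}(f). -/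
open MvPolynomial

noncomputable section

/-- The `k`-th higher Euler operator in the variable `s`:
`E_{s,k}(f) = ∑_{j≥0} (−1)^j binom(k+j,k) d^j(∂_{s,k+j} f)`. -/
def euler {ι : Type*} (d : Derivation ℚ (DiffPoly ι) (DiffPoly ι)) (s : ι ⊕ ι) (k : ℕ)
    (f : DiffPoly ι) : DiffPoly ι :=
  ∑ᶠ j : ℕ, ((-1 : ℚ) ^ j * ((k + j).choose k : ℚ)) •
    (⇑d)^[j] (pderiv (s, k + j) f)

section Aux

variable {ι : Type*} (d : Derivation ℚ (DiffPoly ι) (DiffPoly ι))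

lemma iter_zero_s9 (j : ℕ) : (⇑d)^[j] (0 : DiffPoly ι) = 0 := by
  induction j with
  | zero => rfl
  | succ n ih => rw [Function.iterate_succ_apply, map_zero, ih]

lemma iter_add (j : ℕ) (a b : DiffPoly ι) :
    (⇑d)^[j] (a + b) = (⇑d)^[j] a + (⇑d)^[j] b := by
  induction j generalizing a b with
  | zero => rfl
  | succ n ih => simp only [Function.iterate_succ_apply, map_add, ih]

lemma exists_bound (s : ι ⊕ ι) (g : DiffPoly ι) :
    ∃ N : ℕ, ∀ m : ℕ, N ≤ m → pderiv ((s, m) : (ι ⊕ ι) × ℕ) g = 0 := by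
  classical
  refine ⟨(g.vars.sup Prod.snd) + 1, fun m hm => ?_⟩
  apply pderiv_eq_zero_of_notMem_vars
  intro hmem
  have := Finset.le_sup (f := Prod.snd) hmem
  simp only at this
  omega

lemma bracket_eq (hd : ∀ (s : ι ⊕ ι) (k : ℕ), d (X (s, k)) = X (s, k + 1))
    (s : ι ⊕ ι) (m : ℕ) :
    ⁅(pderiv ((s, m + 1)) : Derivation ℚ (DiffPoly ι) (DiffPoly ι)), d⁆
      = pderiv ((s, m)) := by
  classical
  apply MvPolynomial.derivation_ext
  rintro ⟨t, n⟩
  rw [Derivation.commutator_apply, hd]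
  have hz : d (pderiv ((s, m + 1) : (ι ⊕ ι) × ℕ) (X (t, n))) = 0 := by
    rcases eq_or_ne ((t, n) : (ι ⊕ ι) × ℕ) (s, m + 1) with h | h
    · rw [h, pderiv_X_self, Derivation.map_one_eq_zero]
    · rw [pderiv_X_of_ne h, map_zero]
  rw [hz, sub_zero]
  rcases eq_or_ne ((t, n) : (ι ⊕ ι) × ℕ) (s, m) with h | h
  · rw [Prod.mk.injEq] at h
    obtain ⟨rfl, rfl⟩ := h
    rw [pderiv_X_self, pderiv_X_self]
  · rw [pderiv_X_of_ne h, pderiv_X_of_ne]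
    intro hc
    apply h
    have h1 : t = s := congrArg Prod.fst hc
    have h2 : n + 1 = m + 1 := congrArg Prod.snd hc
    simp [h1]; omega

lemma pd_d (hd : ∀ (s : ι ⊕ ι) (k : ℕ), d (X (s, k)) = X (s, k + 1))
    (s : ι ⊕ ι) (m : ℕ) (f : DiffPoly ι) :
    pderiv ((s, m + 1) : (ι ⊕ ι) × ℕ) (d f)
      = d (pderiv ((s, m + 1) : (ι ⊕ ι) × ℕ) f) + pderiv ((s, m) : (ι ⊕ ι) × ℕ) f := by
  have h := congrArg (fun D : Derivation ℚ (DiffPoly ι) (DiffPoly ι) => D f)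
    (bracket_eq d hd s m)
  simp only [Derivation.commutator_apply] at h
  rw [← h]; ring

lemma pd_d0 (hd : ∀ (s : ι ⊕ ι) (k : ℕ), d (X (s, k)) = X (s, k + 1))
    (s : ι ⊕ ι) (f : DiffPoly ι) :
    pderiv ((s, 0) : (ι ⊕ ι) × ℕ) (d f) = d (pderiv ((s, 0) : (ι ⊕ ι) × ℕ) f) := by
  classical
  have hb : ⁅(pderiv ((s, 0)) : Derivation ℚ (DiffPoly ι) (DiffPoly ι)), d⁆ = 0 := by
    apply MvPolynomial.derivation_ext
    rintro ⟨t, n⟩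
    rw [Derivation.commutator_apply, hd]
    have hz : d (pderiv ((s, 0) : (ι ⊕ ι) × ℕ) (X (t, n))) = 0 := by
      rcases eq_or_ne ((t, n) : (ι ⊕ ι) × ℕ) (s, 0) with h | h
      · rw [h, pderiv_X_self, Derivation.map_one_eq_zero]
      · rw [pderiv_X_of_ne h, map_zero]
    rw [hz, sub_zero, Derivation.coe_zero, Pi.zero_apply, pderiv_X_of_ne]
    intro hc
    exact Nat.succ_ne_zero n (congrArg Prod.snd hc)
  have h := congrArg (fun D : Derivation ℚ (DiffPoly ι) (DiffPoly ι) => D f) hb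
  simp only [Derivation.commutator_apply, Derivation.coe_zero, Pi.zero_apply] at h
  rw [sub_eq_zero] at h
  exact h

lemma euler_eq (s : ι ⊕ ι) (k N : ℕ) (g : DiffPoly ι)
    (h : ∀ m : ℕ, N ≤ m → pderiv ((s, m) : (ι ⊕ ι) × ℕ) g = 0) :
    euler d s k g = ∑ j ∈ Finset.range N,
      ((-1 : ℚ) ^ j * ((k + j).choose k : ℚ)) • (⇑d)^[j] (pderiv (s, k + j) g) := by
  apply finsum_eq_sum_of_support_subset
  intro j hj
  simp only [Function.mem_support] at hj
  simp only [Finset.coe_range, Set.mem_Iio]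
  by_contra hc
  push_neg at hc
  apply hj
  rw [h (k + j) (by omega), iter_zero_s9, smul_zero]

end Aux

/-- (i) the variational derivative annihilates total derivatives:
`E_{s,0}(d f) = 0`; and (ii) `E_{s,k+1}(d f) = E_{s,k}(f)` for all `k`. -/
theorem stmt9 {ι : Type*} (d : Derivation ℚ (DiffPoly ι) (DiffPoly ι))
    (hd : ∀ (s : ι ⊕ ι) (k : ℕ), d (X (s, k)) = X (s, k + 1))
    (f : DiffPoly ι) (s : ι ⊕ ι) :
    euler d s 0 (d f) = 0 ∧ ∀ k : ℕ, euler d s (k + 1) (d f) = euler d s k f := by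
  obtain ⟨N₁, h1⟩ := exists_bound s f
  obtain ⟨N₂, h2⟩ := exists_bound s (d f)
  set N := max N₁ N₂ with hNdef
  have hf : ∀ m : ℕ, N ≤ m → pderiv ((s, m) : (ι ⊕ ι) × ℕ) f = 0 :=
    fun m hm => h1 m (le_trans (le_max_left _ _) hm)
  have hdf : ∀ m : ℕ, N ≤ m → pderiv ((s, m) : (ι ⊕ ι) × ℕ) (d f) = 0 :=
    fun m hm => h2 m (le_trans (le_max_right _ _) hm)
  constructor
  · -- part (i)
    rw [euler_eq d s 0 (N + 1) (d f) (fun m hm => hdf m (by omega))]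
    calc
      ∑ j ∈ Finset.range (N + 1), ((-1 : ℚ) ^ j * ((0 + j).choose 0 : ℚ)) •
          (⇑d)^[j] (pderiv (s, 0 + j) (d f))
          = ∑ j ∈ Finset.range (N + 1), ((-1 : ℚ) ^ j) •
            (⇑d)^[j] (pderiv ((s, j) : (ι ⊕ ι) × ℕ) (d f)) := by
            apply Finset.sum_congr rfl; intro j _; norm_num
      _ = (∑ j ∈ Finset.range N, ((-1 : ℚ) ^ (j + 1)) •
            (⇑d)^[j + 1] (pderiv ((s, j + 1) : (ι ⊕ ι) × ℕ) (d f)))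
          + ((-1 : ℚ) ^ 0) • (⇑d)^[0] (pderiv ((s, 0) : (ι ⊕ ι) × ℕ) (d f)) :=
            Finset.sum_range_succ' _ N
      _ = (∑ j ∈ Finset.range N,
            (((-1 : ℚ) ^ (j + 1)) • (⇑d)^[(j + 1) + 1] (pderiv ((s, j + 1) : (ι ⊕ ι) × ℕ) f)
              - ((-1 : ℚ) ^ j) • (⇑d)^[j + 1] (pderiv ((s, j) : (ι ⊕ ι) × ℕ) f)))
          + ((-1 : ℚ) ^ 0) • (⇑d)^[0 + 1] (pderiv ((s, 0) : (ι ⊕ ι) × ℕ) f) := by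
            congr 1
            · apply Finset.sum_congr rfl; intro j _
              rw [pd_d d hd, iter_add d, ← Function.iterate_succ_apply, smul_add,
                show ((-1 : ℚ) ^ (j + 1)) = -(-1 : ℚ) ^ j from by ring]
              simp only [neg_smul]
              abel
            · rw [pd_d0 d hd]
              rfl
      _ = ((((-1 : ℚ) ^ N) • (⇑d)^[N + 1] (pderiv ((s, N) : (ι ⊕ ι) × ℕ) f))
            - (((-1 : ℚ) ^ 0) • (⇑d)^[0 + 1] (pderiv ((s, 0) : (ι ⊕ ι) × ℕ) f)))
          + ((-1 : ℚ) ^ 0) • (⇑d)^[0 + 1] (pderiv ((s, 0) : (ι ⊕ ι) × ℕ) f) := by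
            congr 1
            exact Finset.sum_range_sub
              (fun j => ((-1 : ℚ) ^ j) • (⇑d)^[j + 1] (pderiv ((s, j) : (ι ⊕ ι) × ℕ) f)) N
      _ = 0 := by
            rw [hf N le_rfl, iter_zero_s9, smul_zero]
            abel
  · -- part (ii)
    intro k
    rw [euler_eq d s (k + 1) (N + 1) (d f) (fun m hm => hdf m (by omega)),
      euler_eq d s k (N + 1) f (fun m hm => hf m (by omega))]
    have key : ∀ j : ℕ,
        ((-1 : ℚ) ^ j * ((k + 1 + j).choose (k + 1) : ℚ)) •
          (⇑d)^[j] (pderiv (s, k + 1 + j) (d f))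
        = ((-1 : ℚ) ^ j * ((k + 1 + j).choose (k + 1) : ℚ)) •
            (⇑d)^[j + 1] (pderiv ((s, (k + j) + 1) : (ι ⊕ ι) × ℕ) f)
          + ((-1 : ℚ) ^ j * ((k + 1 + j).choose (k + 1) : ℚ)) •
            (⇑d)^[j] (pderiv ((s, k + j) : (ι ⊕ ι) × ℕ) f) := by
      intro j
      rw [show k + 1 + j = (k + j) + 1 from by omega, pd_d d hd, iter_add d,
        ← Function.iterate_succ_apply, smul_add]
    rw [Finset.sum_congr rfl (fun j _ => key j), Finset.sum_add_distrib]
    have hfirst : ∑ j ∈ Finset.range (N + 1),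
        ((-1 : ℚ) ^ j * ((k + 1 + j).choose (k + 1) : ℚ)) •
          (⇑d)^[j + 1] (pderiv ((s, (k + j) + 1) : (ι ⊕ ι) × ℕ) f)
        = ∑ j ∈ Finset.range (N + 1),
          (((-1 : ℚ) ^ j * ((k + j).choose k : ℚ))
            - ((-1 : ℚ) ^ j * ((k + 1 + j).choose (k + 1) : ℚ))) •
            (⇑d)^[j] (pderiv ((s, k + j) : (ι ⊕ ι) × ℕ) f) := by
      rw [Finset.sum_range_succ, Finset.sum_range_succ']
      rw [hf (k + N + 1) (by omega), iter_zero_s9, smul_zero, add_zero]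
      have h00 : (((-1 : ℚ) ^ 0 * ((k + 0).choose k : ℚ))
            - ((-1 : ℚ) ^ 0 * ((k + 1 + 0).choose (k + 1) : ℚ))) •
            (⇑d)^[0] (pderiv ((s, k + 0) : (ι ⊕ ι) × ℕ) f) = 0 := by
        norm_num
      rw [h00, add_zero]
      apply Finset.sum_congr rfl; intro j _
      have hp : ((k + 1 + (j + 1)).choose (k + 1) : ℚ)
          = ((k + (j + 1)).choose k : ℚ) + ((k + 1 + j).choose (k + 1) : ℚ) := by
        norm_cast
        rw [show k + 1 + (j + 1) = (k + j + 1) + 1 from by omega,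
          show k + (j + 1) = k + j + 1 from by omega,
          show k + 1 + j = k + j + 1 from by omega]
        exact Nat.choose_succ_succ (k + j + 1) k
      have hs : ((-1 : ℚ) ^ j * ((k + 1 + j).choose (k + 1) : ℚ))
          = (((-1 : ℚ) ^ (j + 1) * ((k + (j + 1)).choose k : ℚ))
            - ((-1 : ℚ) ^ (j + 1) * ((k + 1 + (j + 1)).choose (k + 1) : ℚ))) := by
        rw [hp]; ring
      rw [hs]
      rfl
    rw [hfirst, ← Finset.sum_add_distrib]
    apply Finset.sum_congr rfl; intro j _
    rw [sub_smul]
    abel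

end
end

section
/- Let R be a commutative ring, let D, S : R → R be derivations, let a ∈ R, and let n ≥ 0. For x ∈ R let L_x : R → R denote multiplication by x, and for an additive endomorphism T of R let Φ_a(T) := T∘L_a − L_a∘T. Then the (n+2)-fold iterate Φ_a^{n+2}( D^{∘(n+1)} ∘ S ) equals (n+2)! · L_{(D a)^{n+1} · (S a)}, where D^{∘(n+1)} is the (n+1)-fold composition of D. -/
/-- The commutator `Φ_a(T) = T ∘ L_a − L_a ∘ T` of an additive endomorphism `T`
with the multiplication operator `L_a`. -/
def mulComm' {R : Type*} [CommRing R] (a : R) (T : R → R) : R → R :=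
  fun y => T (a * y) - a * T y

section Aux

variable {R : Type*} [CommRing R] (a : R)

lemma mc_addfun (X Y : R → R) :
    mulComm' a (fun y => X y + Y y) = fun y => mulComm' a X y + mulComm' a Y y := by
  funext y; simp [mulComm']; ring

lemma it_addfun (k : ℕ) (X Y : R → R) :
    (mulComm' a)^[k] (fun y => X y + Y y)
      = fun y => (mulComm' a)^[k] X y + (mulComm' a)^[k] Y y := by
  induction k generalizing X Y with
  | zero => rfl
  | succ k ih =>
      rw [Function.iterate_succ_apply, Function.iterate_succ_apply,
        Function.iterate_succ_apply, mc_addfun, ih]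

lemma it_mulL (k : ℕ) (c : R) (X : R → R) :
    (mulComm' a)^[k] (fun y => c * X y) = fun y => c * (mulComm' a)^[k] X y := by
  induction k generalizing X with
  | zero => rfl
  | succ k ih =>
      rw [Function.iterate_succ_apply, Function.iterate_succ_apply]
      have : mulComm' a (fun y => c * X y) = fun y => c * mulComm' a X y := by
        funext y; simp [mulComm']; ring
      rw [this, ih]

lemma it_Dcomp (D : Derivation ℤ R R) (k : ℕ) (X : R → R) :
    (mulComm' a)^[k + 1] (⇑D ∘ X)
      = fun y => (k + 1) • (D a * (mulComm' a)^[k] X y)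
          + D ((mulComm' a)^[k + 1] X y) := by
  induction k generalizing X with
  | zero =>
      funext y
      simp only [zero_add, Function.iterate_one, Function.iterate_zero, id_eq, mulComm',
        Function.comp_apply, one_smul]
      have : X (a * y) = a * X y + (X (a * y) - a * X y) := by ring
      rw [this, map_add, Derivation.leibniz]
      simp
      ring
  | succ k ih =>
      have step : mulComm' a (⇑D ∘ X)
          = fun y => D a * X y + D (mulComm' a X y) := by
        funext y
        simp only [mulComm', Function.comp_apply]
        have : X (a * y) = a * X y + (X (a * y) - a * X y) := by ring
        rw [this, map_add, Derivation.leibniz]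
        simp
        ring
      rw [Function.iterate_succ_apply, step, it_addfun, it_mulL]
      have e1 : (fun y => D (mulComm' a X y)) = ⇑D ∘ mulComm' a X := rfl
      rw [e1, ih (mulComm' a X)]
      funext y
      rw [← Function.iterate_succ_apply, ← Function.iterate_succ_apply]
      simp only [nsmul_eq_mul]
      push_cast
      ring

lemma main' (D S : Derivation ℤ R R) (m : ℕ) :
    (mulComm' a)^[m + 1] ((⇑D)^[m] ∘ ⇑S)
      = fun y => (m + 1).factorial • ((D a) ^ m * S a * y) := by
  induction m with
  | zero =>
      funext y
      simp [mulComm', Derivation.leibniz]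
      ring
  | succ m ih =>
      have hc : (⇑D)^[m + 1] ∘ ⇑S = ⇑D ∘ ((⇑D)^[m] ∘ ⇑S) := by
        rw [Function.iterate_succ']; rfl
      rw [hc, it_Dcomp a D (m + 1) ((⇑D)^[m] ∘ ⇑S), ih]
      have h2 : (mulComm' a)^[m + 2] ((⇑D)^[m] ∘ ⇑S)
          = fun _ => (0 : R) := by
        rw [show m + 2 = (m + 1) + 1 from rfl, Function.iterate_succ_apply', ih]
        funext y
        simp [mulComm']
        ring
      rw [h2]
      funext y
      simp only [map_zero, add_zero, smul_eq_mul, nsmul_eq_mul]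
      push_cast [Nat.factorial_succ]
      ring

end Aux

/-- for derivations `D, S` of a commutative ring `R`, `a ∈ R` and
`n ≥ 0`, the `(n+2)`-fold iterated commutator `Φ_a^{n+2}( D^{∘(n+1)} ∘ S )` equals
`(n+2)! · L_{(D a)^{n+1}·(S a)}`. -/
theorem stmt13 {R : Type*} [CommRing R] (D S : Derivation ℤ R R) (a : R) (n : ℕ) :
    (mulComm' a)^[n + 2] ((⇑D)^[n + 1] ∘ ⇑S)
      = fun y => (n + 2).factorial • ((D a) ^ (n + 1) * S a * y) := by
  exact main' a D S (n + 1)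
end
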